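/- arXiv:2309.01242 — 3 statements merged into one kernel-verified Lean document; each statement's English description precedes it below -/
import Mathlib

section
/- Let f_j : ℝⁿ → ℝⁿ, j ∈ {1,…,M}, be diagonal continuous nonlinearities satisfying the sector condition, and let μ ∈ {1,…,M} be such that for all j ∈ {1,…,μ} and all i ∈ {1,…,n}, lim_{|ν|→∞} ∫_0^ν f_j^i(r) dr = +∞. Let P ∈ ℝ^{n×n} be symmetric positive semidefinite and Λ^j = diag(Λ_1^j,…,Λ_n^j), j ∈ {1,…,M}, be diagonal matrices with nonnegative entries, and suppose there exists ρ ∈ ℝ such that P + ρ ∑_{j=1}^{μ} Λ^j is positive definite. Then the function V(x) = x^⊤ P x + 2 ∑_{j=1}^{M} ∑_{i=1}^{n} Λ_i^j ∫_0^{x_i} f_j^i(ν) dν admits class-K∞ bounds: there exist α₁, α₂ of class K∞ such that α₁(‖x‖) ≤ V(x) ≤ α₂(‖x‖) for all x ∈ ℝⁿ. -/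
/-!
The sector condition makes every integral term nonnegative, so `V ≥ xᵀ P x ≥ 0`; `V` is
continuous and vanishes at `0`. It is positive definite: if `V x = 0`, then `xᵀ P x = 0` and every
coordinate on which some `Λʲ`, `j ≤ μ`, is positive vanishes, so `xᵀ (P + ρ ∑ Λʲ) x = 0`. It is
radially unbounded: either one of these coordinates is large, and then its integral term is large
because the integral diverges, or they are all bounded, and then positive definiteness of
`P + ρ ∑ Λʲ` forces `xᵀ P x ≥ c ‖x‖² - C`. A continuous, positive definite, radially unbounded
function on a finite-dimensional space lies between two class-`K∞` functions of `‖x‖`, obtained by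
averaging its lower envelope `inf {V x | r ≤ ‖x‖}` and its upper envelope `sup {V x | ‖x‖ ≤ r}`.
-/

open Filter Matrix Finset

/-- Class `K∞` function: continuous, strictly increasing on `[0,∞)`, vanishing at `0`,
and unbounded. -/
def IsClassKInf (α : ℝ → ℝ) : Prop :=
  ContinuousOn α (Set.Ici 0) ∧ StrictMonoOn α (Set.Ici 0) ∧ α 0 = 0 ∧
    Tendsto α atTop atTop

/-- Diagonal matrix with nonnegative diagonal entries. -/
def IsNonnegDiag {n : ℕ} (A : Matrix (Fin n) (Fin n) ℝ) : Prop :=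
  ∃ d : Fin n → ℝ, (∀ i, 0 ≤ d i) ∧ A = Matrix.diagonal d

theorem isClassKInf_id : IsClassKInf id :=
  ⟨continuousOn_id, strictMonoOn_id, rfl, tendsto_id⟩

theorem Monotone.mul_le_intervalIntegral {a : ℝ → ℝ} (ha : Monotone a) {p q : ℝ} (hpq : p ≤ q) :
    (q - p) * a p ≤ ∫ s in p..q, a s := by
  calc (q - p) * a p = ∫ _ in p..q, a p := by simp
    _ ≤ ∫ s in p..q, a s :=
      intervalIntegral.integral_mono_on hpq intervalIntegrable_const ha.intervalIntegrable
        fun _ hs => ha hs.1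

theorem Monotone.intervalIntegral_le_mul {a : ℝ → ℝ} (ha : Monotone a) {p q : ℝ} (hpq : p ≤ q) :
    ∫ s in p..q, a s ≤ (q - p) * a q := by
  calc ∫ s in p..q, a s ≤ ∫ _ in p..q, a q :=
      intervalIntegral.integral_mono_on hpq ha.intervalIntegrable intervalIntegrable_const
        fun _ hs => ha hs.2
    _ = (q - p) * a q := by simp

/-- The averaged primitive `r ↦ (∫₀ʳ a) / (1 + r)` is a continuous, strictly increasing minorant. -/
theorem exists_classKInf_le_of_monotone {a : ℝ → ℝ} (ha : Monotone a) (ha0 : 0 ≤ a 0)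
    (hpos : ∀ r, 0 < r → 0 < a r) (htop : Tendsto a atTop atTop) :
    ∃ α, IsClassKInf α ∧ ∀ r, 0 ≤ r → α r ≤ a r := by
  set F : ℝ → ℝ := fun r => ∫ s in (0 : ℝ)..r, a s
  have hF0 : F 0 = 0 := intervalIntegral.integral_same
  have hF_add : ∀ p q, p ≤ q → F p + (q - p) * a p ≤ F q := fun p q hpq => by
    have := ha.mul_le_intervalIntegral hpq
    rw [← intervalIntegral.integral_interval_sub_left (a := 0) ha.intervalIntegrable
      ha.intervalIntegrable] at this
    linarith
  have hF_le : ∀ r, 0 ≤ r → F r ≤ r * a r := fun r hr => by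
    simpa using ha.intervalIntegral_le_mul hr
  have hF_nonneg : ∀ r, 0 ≤ r → 0 ≤ F r := fun r hr => by
    have := hF_add 0 r hr
    rw [hF0] at this
    nlinarith
  refine ⟨fun r => F r / (1 + r), ⟨?_, ?_, by simp [hF0], ?_⟩, fun r hr => ?_⟩
  · exact (intervalIntegral.continuous_primitive (fun _ _ => ha.intervalIntegrable) 0
      ).continuousOn.div (by fun_prop) fun r (hr : 0 ≤ r) => by positivity
  · intro r (hr : 0 ≤ r) s (hs : 0 ≤ s) hrs
    rw [div_lt_div_iff₀ (by positivity) (by positivity)]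
    rcases hr.eq_or_lt with rfl | hr
    · have := hF_add (s / 2) s (by linarith)
      have := hF_nonneg (s / 2) (by linarith)
      have := hpos (s / 2) (by linarith)
      rw [hF0]
      nlinarith
    · have := hF_add r s hrs.le
      have := hF_le r hr.le
      have := hpos r hr
      nlinarith
  · have hlow : ∀ r, 2 ≤ r → a (r / 2) / 3 ≤ F r / (1 + r) := fun r hr => by
      rw [div_le_div_iff₀ (by norm_num) (by linarith)]
      have := hF_add (r / 2) r (by linarith)
      have := hF_nonneg (r / 2) (by linarith)
      have := ha (show 0 ≤ r / 2 by linarith)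
      nlinarith
    refine tendsto_atTop_mono' atTop (eventually_atTop.2 ⟨2, hlow⟩) ?_
    exact (htop.comp (tendsto_id.atTop_div_const two_pos)).atTop_div_const three_pos
  · rw [div_le_iff₀ (by positivity)]
    have := hF_le r hr
    have := ha hr
    nlinarith

/-- The witness is `r ↦ r + ∫₁² b (r t) dt`: for `r > 0` the integral is the mean of `b` over
`[r, 2r]`, hence lies between `b r` and `b (2r)` and is continuous in `r`. -/
theorem exists_classKInf_ge_of_monotone {b : ℝ → ℝ} (hb : Monotone b) (hb0 : b 0 = 0)
    (hcont : ContinuousWithinAt b (Set.Ici 0) 0) :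
    ∃ α, IsClassKInf α ∧ ∀ r, 0 ≤ r → b r ≤ α r := by
  set G : ℝ → ℝ := fun r => ∫ t in (1 : ℝ)..2, b (r * t) with hG
  have hb_mul : ∀ r, 0 ≤ r → Monotone fun t => b (r * t) := fun r hr =>
    hb.comp (monotone_mul_left_of_nonneg hr)
  have hG_ge : ∀ r, 0 ≤ r → b r ≤ G r := fun r hr => by
    have h := (hb_mul r hr).mul_le_intervalIntegral one_le_two
    norm_num at h
    exact h
  have hG_le : ∀ r, 0 ≤ r → G r ≤ b (2 * r) := fun r hr => by
    have h := (hb_mul r hr).intervalIntegral_le_mul one_le_two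
    rwa [show (2 : ℝ) - 1 = 1 by norm_num, one_mul, mul_comm r 2] at h
  have hG0 : G 0 = 0 := by simp [hG, hb0]
  have hG_mono : MonotoneOn G (Set.Ici 0) := fun r hr s hs hrs =>
    intervalIntegral.integral_mono_on one_le_two (hb_mul r hr).intervalIntegrable
      (hb_mul s hs).intervalIntegrable
      fun t ht => hb (mul_le_mul_of_nonneg_right hrs (by linarith [ht.1]))
  have hG_eq : Set.EqOn G (fun r => ((∫ s in (0 : ℝ)..2 * r, b s) - ∫ s in (0 : ℝ)..r, b s) / r)
      (Set.Ioi 0) := fun r (hr : 0 < r) => by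
    show ∫ t in (1 : ℝ)..2, b (r * t) = ((∫ s in (0 : ℝ)..2 * r, b s) - ∫ s in (0 : ℝ)..r, b s) / r
    rw [intervalIntegral.integral_interval_sub_left hb.intervalIntegrable hb.intervalIntegrable,
      intervalIntegral.integral_comp_mul_left b hr.ne', smul_eq_mul, mul_one, mul_comm r 2,
      inv_mul_eq_div]
  have hG_cont : ContinuousOn G (Set.Ici 0) := by
    intro r (hr : 0 ≤ r)
    rcases hr.eq_or_lt with rfl | hr
    · have hb2 : ContinuousWithinAt (fun r => b (2 * r)) (Set.Ici 0) 0 :=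
        hcont.comp_of_eq (by fun_prop)
          (fun r (hr : 0 ≤ r) => Set.mem_Ici.2 (mul_nonneg zero_le_two hr)) (mul_zero 2)
      rw [ContinuousWithinAt, mul_zero, hb0] at hb2
      rw [ContinuousWithinAt, hG0]
      refine tendsto_of_tendsto_of_tendsto_of_le_of_le' tendsto_const_nhds hb2 ?_ ?_
      · filter_upwards [self_mem_nhdsWithin] with r (hr : 0 ≤ r)
        exact hb0 ▸ (hb hr).trans (hG_ge r hr)
      · filter_upwards [self_mem_nhdsWithin] with r hr using hG_le r hr
    · have hF := intervalIntegral.continuous_primitive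
        (fun _ _ => hb.intervalIntegrable (μ := MeasureTheory.volume)) 0
      refine ContinuousAt.continuousWithinAt (ContinuousAt.congr_of_eventuallyEq ?_
        (hG_eq.eventuallyEq_of_mem (Ioi_mem_nhds hr)))
      exact ((hF.comp (continuous_const_mul 2)).sub hF).continuousAt.div continuousAt_id hr.ne'
  refine ⟨fun r => r + G r, ⟨continuousOn_id.add hG_cont,
    fun r hr s hs hrs => add_lt_add_of_lt_of_le hrs (hG_mono hr hs hrs.le), by simp [hG0], ?_⟩,
    fun r hr => le_add_of_nonneg_of_le hr (hG_ge r hr)⟩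
  refine tendsto_atTop_mono' atTop ?_ tendsto_id
  filter_upwards [eventually_ge_atTop 0] with r hr
  exact le_add_of_nonneg_right (hb0 ▸ (hb hr).trans (hG_ge r hr))

theorem exists_forall_le_norm_of_eventually_cocompact {E : Type*} [SeminormedAddCommGroup E]
    {p : E → Prop} (h : ∀ᶠ x in cocompact E, p x) : ∃ R, ∀ x, R ≤ ‖x‖ → p x := by
  have h' := h.filter_mono Metric.cobounded_le_cocompact
  rw [← comap_norm_atTop, eventually_comap, eventually_atTop] at h'
  obtain ⟨R, hR⟩ := h'
  exact ⟨R, fun x hx => hR _ hx x rfl⟩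

section Envelope

variable {E : Type*} [NormedAddCommGroup E]

noncomputable def lowerEnvelope (V : E → ℝ) (r : ℝ) : ℝ := sInf (V '' {x | r ≤ ‖x‖})

/-- Negative radii are clipped to `0`, so that the envelope is monotone on all of `ℝ`. -/
noncomputable def upperEnvelope (V : E → ℝ) (r : ℝ) : ℝ :=
  sSup (V '' Metric.closedBall 0 (max r 0))

variable {V : E → ℝ}

theorem lowerEnvelope_le (hV : ∀ x, 0 ≤ V x) {x : E} {r : ℝ} (hr : r ≤ ‖x‖) :
    lowerEnvelope V r ≤ V x :=
  csInf_le ⟨0, Set.forall_mem_image.2 fun x _ => hV x⟩ ⟨x, hr, rfl⟩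

theorem lowerEnvelope_nonneg (hV : ∀ x, 0 ≤ V x) (r : ℝ) : 0 ≤ lowerEnvelope V r :=
  Real.sInf_nonneg (Set.forall_mem_image.2 fun x _ => hV x)

theorem lowerEnvelope_mono [NormedSpace ℝ E] [Nontrivial E] (hV : ∀ x, 0 ≤ V x) :
    Monotone (lowerEnvelope V) := fun r s hrs => by
  obtain ⟨x, hx⟩ := exists_norm_eq E (le_max_right s 0)
  exact csInf_le_csInf ⟨0, Set.forall_mem_image.2 fun x _ => hV x⟩
    ⟨V x, x, (le_max_left s 0).trans hx.ge, rfl⟩ (Set.image_mono fun x hx => hrs.trans hx)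

theorem lowerEnvelope_pos [NormedSpace ℝ E] [Nontrivial E] (hc : Continuous V)
    (hpos : ∀ x, x ≠ 0 → 0 < V x) (htop : Tendsto V (cocompact E) atTop) {r : ℝ} (hr : 0 < r) :
    0 < lowerEnvelope V r := by
  obtain ⟨x₀, hx₀⟩ := exists_norm_eq E hr.le
  obtain ⟨z, hz, hmin⟩ := hc.continuousOn.exists_isMinOn' (isClosed_le continuous_const
    continuous_norm) (x₀ := x₀) hx₀.ge
    ((htop.eventually (eventually_ge_atTop (V x₀))).filter_mono inf_le_left)
  have hz0 : z ≠ 0 := norm_pos_iff.1 (hr.trans_le hz)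
  exact (hpos z hz0).trans_le
    (le_csInf ⟨V z, z, hz, rfl⟩ (Set.forall_mem_image.2 fun x hx => hmin hx))

theorem tendsto_lowerEnvelope_atTop [NormedSpace ℝ E] [Nontrivial E]
    (htop : Tendsto V (cocompact E) atTop) : Tendsto (lowerEnvelope V) atTop atTop := by
  refine tendsto_atTop.2 fun C => ?_
  obtain ⟨R, hR⟩ := exists_forall_le_norm_of_eventually_cocompact (htop.eventually_ge_atTop C)
  filter_upwards [eventually_ge_atTop R] with r hr
  obtain ⟨x, hx⟩ := exists_norm_eq E (le_max_right r 0)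
  exact le_csInf ⟨V x, x, (le_max_left r 0).trans hx.ge, rfl⟩
    (Set.forall_mem_image.2 fun x hx => hR x (hr.trans hx))

theorem upperEnvelope_zero : upperEnvelope V 0 = V 0 := by
  simp [upperEnvelope]

variable [ProperSpace E]

theorem le_upperEnvelope (hc : Continuous V) (x : E) : V x ≤ upperEnvelope V ‖x‖ :=
  le_csSup ((isCompact_closedBall 0 _).image hc).bddAbove
    ⟨x, mem_closedBall_zero_iff.2 (le_max_left _ _), rfl⟩

theorem upperEnvelope_mono (hc : Continuous V) : Monotone (upperEnvelope V) := fun r s hrs =>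
  csSup_le_csSup ((isCompact_closedBall 0 _).image hc).bddAbove ⟨V 0, 0, by simp, rfl⟩
    (Set.image_mono (Metric.closedBall_subset_closedBall (max_le_max_right 0 hrs)))

theorem continuousWithinAt_upperEnvelope_zero (hc : Continuous V) :
    ContinuousWithinAt (upperEnvelope V) (Set.Ici 0) 0 := by
  rw [ContinuousWithinAt, upperEnvelope_zero]
  refine tendsto_order.2 ⟨fun c hc' => ?_, fun c hc' => ?_⟩
  · filter_upwards [self_mem_nhdsWithin] with r (hr : 0 ≤ r)
    calc c < V 0 := hc'
      _ = upperEnvelope V 0 := upperEnvelope_zero.symm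
      _ ≤ upperEnvelope V r := upperEnvelope_mono hc hr
  · obtain ⟨m, hm0, hmc⟩ := exists_between hc'
    obtain ⟨δ, hδ, hball⟩ := Metric.eventually_nhds_iff_ball.1
      ((hc.tendsto 0).eventually (eventually_lt_nhds hm0))
    filter_upwards [self_mem_nhdsWithin, nhdsWithin_le_nhds (Iio_mem_nhds hδ)]
      with r (hr : 0 ≤ r) (hrδ : r < δ)
    refine (csSup_le (⟨V 0, 0, by simp, rfl⟩ : (V '' _).Nonempty)
      (Set.forall_mem_image.2 fun y hy => ?_)).trans_lt hmc
    exact (hball y (Metric.closedBall_subset_ball (max_lt hrδ hδ) hy)).le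

end Envelope

theorem exists_classKInf_sandwich {E : Type*} [NormedAddCommGroup E] [NormedSpace ℝ E]
    [ProperSpace E] {V : E → ℝ} (hc : Continuous V) (h0 : V 0 = 0)
    (hpos : ∀ x, x ≠ 0 → 0 < V x) (htop : Tendsto V (cocompact E) atTop) :
    ∃ α₁ α₂ : ℝ → ℝ, IsClassKInf α₁ ∧ IsClassKInf α₂ ∧ ∀ x, α₁ ‖x‖ ≤ V x ∧ V x ≤ α₂ ‖x‖ := by
  rcases subsingleton_or_nontrivial E with hE | hE
  · exact ⟨id, id, isClassKInf_id, isClassKInf_id, fun x => by simp [Subsingleton.elim x 0, h0]⟩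
  have hV : ∀ x, 0 ≤ V x := fun x => by
    rcases eq_or_ne x 0 with rfl | hx
    exacts [h0.ge, (hpos x hx).le]
  obtain ⟨α₁, hα₁, hle⟩ := exists_classKInf_le_of_monotone (lowerEnvelope_mono hV)
    (lowerEnvelope_nonneg hV 0) (fun r hr => lowerEnvelope_pos hc hpos htop hr)
    (tendsto_lowerEnvelope_atTop htop)
  obtain ⟨α₂, hα₂, hge⟩ := exists_classKInf_ge_of_monotone (upperEnvelope_mono hc)
    (upperEnvelope_zero.trans h0) (continuousWithinAt_upperEnvelope_zero hc)
  exact ⟨α₁, α₂, hα₁, hα₂, fun x => ⟨(hle _ (norm_nonneg x)).trans (lowerEnvelope_le hV le_rfl),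
    (le_upperEnvelope hc x).trans (hge _ (norm_nonneg x))⟩⟩

theorem exists_mul_norm_sq_le_of_homogeneous {E : Type*} [NormedAddCommGroup E]
    [NormedSpace ℝ E] [ProperSpace E] {q : E → ℝ} (hc : Continuous q)
    (hsmul : ∀ (t : ℝ) x, q (t • x) = t ^ 2 * q x) (hpos : ∀ x, x ≠ 0 → 0 < q x) :
    ∃ c > 0, ∀ x, c * ‖x‖ ^ 2 ≤ q x := by
  rcases subsingleton_or_nontrivial E with hE | hE
  · refine ⟨1, one_pos, fun x => ?_⟩
    simpa [Subsingleton.elim x 0] using (hsmul 0 0).ge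
  obtain ⟨e, he⟩ := exists_norm_eq E zero_le_one
  obtain ⟨z, hz, hmin⟩ := (isCompact_sphere (0 : E) 1).exists_isMinOn
    ⟨e, mem_sphere_zero_iff_norm.2 he⟩ hc.continuousOn
  have hz1 : ‖z‖ = 1 := mem_sphere_zero_iff_norm.1 hz
  refine ⟨q z, hpos z (norm_ne_zero_iff.1 (hz1 ▸ one_ne_zero)), fun x => ?_⟩
  rcases eq_or_ne x 0 with rfl | hx
  · simpa using (hsmul 0 0).ge
  have hx0 : 0 < ‖x‖ := norm_pos_iff.2 hx
  have hunit : ‖x‖⁻¹ • x ∈ Metric.sphere (0 : E) 1 := by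
    rw [mem_sphere_zero_iff_norm, norm_smul, norm_inv, norm_norm, inv_mul_cancel₀ hx0.ne']
  calc q z * ‖x‖ ^ 2 ≤ q (‖x‖⁻¹ • x) * ‖x‖ ^ 2 := by gcongr; exact hmin hunit
    _ = q x := by rw [hsmul]; field_simp

theorem Matrix.PosDef.exists_mul_norm_sq_le {ι : Type*} [Fintype ι] {A : Matrix ι ι ℝ}
    (hA : A.PosDef) : ∃ c > 0, ∀ x : EuclideanSpace ℝ ι, c * ‖x‖ ^ 2 ≤ x ⬝ᵥ A *ᵥ x :=
  exists_mul_norm_sq_le_of_homogeneous (by fun_prop)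
    (fun t x => by simp only [WithLp.ofLp_smul, mulVec_smul, smul_dotProduct, dotProduct_smul,
      smul_eq_mul]; ring)
    (fun x hx => by simpa using hA.dotProduct_mulVec_pos ((WithLp.ofLp_eq_zero 2).not.2 hx))

theorem IsNonnegDiag.diag_nonneg {n : ℕ} {A : Matrix (Fin n) (Fin n) ℝ} (hA : IsNonnegDiag A)
    (i : Fin n) : 0 ≤ A i i := by
  obtain ⟨d, hd, rfl⟩ := hA
  simpa using hd i

theorem IsNonnegDiag.dotProduct_mulVec_self {n : ℕ} {A : Matrix (Fin n) (Fin n) ℝ}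
    (hA : IsNonnegDiag A) (x : Fin n → ℝ) : x ⬝ᵥ A *ᵥ x = ∑ i, A i i * x i ^ 2 := by
  obtain ⟨d, -, rfl⟩ := hA
  simp only [dotProduct, mulVec_diagonal, diagonal_apply_eq]
  exact Finset.sum_congr rfl fun i _ => by ring

theorem intervalIntegral_pos_of_sector {h : ℝ → ℝ} (hc : Continuous h)
    (hs : ∀ ν, ν ≠ 0 → 0 < ν * h ν) {t : ℝ} (ht : t ≠ 0) : 0 < ∫ ν in (0 : ℝ)..t, h ν := by
  rcases ht.lt_or_gt with ht | ht
  · have := intervalIntegral.intervalIntegral_pos_of_pos_on (hc.neg.intervalIntegrable t 0)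
      (fun ν hν => neg_pos.2 (neg_of_mul_pos_right (hs ν hν.2.ne) hν.2.le)) ht
    rwa [Pi.neg_def, intervalIntegral.integral_neg, ← intervalIntegral.integral_symm] at this
  · exact intervalIntegral.intervalIntegral_pos_of_pos_on (hc.intervalIntegrable 0 t)
      (fun ν hν => pos_of_mul_pos_right (hs ν hν.1.ne') hν.1.le) ht

theorem intervalIntegral_nonneg_of_sector {h : ℝ → ℝ} (hc : Continuous h)
    (hs : ∀ ν, ν ≠ 0 → 0 < ν * h ν) (t : ℝ) : 0 ≤ ∫ ν in (0 : ℝ)..t, h ν := by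
  rcases eq_or_ne t 0 with rfl | ht
  · simp
  · exact (intervalIntegral_pos_of_sector hc hs ht).le

section Lyapunov

variable {n : ℕ} {κ : Type*}

noncomputable def lyapunovFn (P : Matrix (Fin n) (Fin n) ℝ) (Λ : κ → Matrix (Fin n) (Fin n) ℝ)
    (g : κ → Fin n → ℝ → ℝ) (s : Finset κ) (x : EuclideanSpace ℝ (Fin n)) : ℝ :=
  x ⬝ᵥ P *ᵥ x + 2 * ∑ j ∈ s, ∑ i, Λ j i i * ∫ ν in (0 : ℝ)..x i, g j i ν

variable {P : Matrix (Fin n) (Fin n) ℝ} {Λ : κ → Matrix (Fin n) (Fin n) ℝ}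
  {g : κ → Fin n → ℝ → ℝ} {s t : Finset κ}

theorem continuous_lyapunovFn (hcont : ∀ j ∈ s, ∀ i, Continuous (g j i)) :
    Continuous (lyapunovFn P Λ g s) := by
  have hprim : ∀ j ∈ s, ∀ i, Continuous fun τ => ∫ ν in (0 : ℝ)..τ, g j i ν := fun j hj i =>
    intervalIntegral.continuous_primitive (fun _ _ => (hcont j hj i).intervalIntegrable _ _) 0
  refine (by fun_prop : Continuous fun x : EuclideanSpace ℝ (Fin n) => x ⬝ᵥ P *ᵥ x).add
    (continuous_const.mul (continuous_finsetSum _ fun j hj => continuous_finsetSum _ fun i _ =>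
      continuous_const.mul ((hprim j hj i).comp (by fun_prop))))

theorem lyapunovFn_zero : lyapunovFn P Λ g s 0 = 0 := by
  simp [lyapunovFn]

theorem diag_mul_intervalIntegral_nonneg (hΛ : ∀ j ∈ s, IsNonnegDiag (Λ j))
    (hcont : ∀ j ∈ s, ∀ i, Continuous (g j i))
    (hsector : ∀ j ∈ s, ∀ i ν, ν ≠ 0 → 0 < ν * g j i ν) :
    ∀ j ∈ s, ∀ i τ, 0 ≤ Λ j i i * ∫ ν in (0 : ℝ)..τ, g j i ν := fun j hj i τ =>
  mul_nonneg ((hΛ j hj).diag_nonneg i)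
    (intervalIntegral_nonneg_of_sector (hcont j hj i) (hsector j hj i) τ)

theorem dotProduct_mulVec_le_lyapunovFn
    (hterm : ∀ j ∈ s, ∀ i τ, 0 ≤ Λ j i i * ∫ ν in (0 : ℝ)..τ, g j i ν)
    (x : EuclideanSpace ℝ (Fin n)) : x ⬝ᵥ P *ᵥ x ≤ lyapunovFn P Λ g s x :=
  le_add_of_nonneg_right (mul_nonneg zero_le_two
    (sum_nonneg fun j hj => sum_nonneg fun i _ => hterm j hj i _))

theorem two_mul_diag_mul_intervalIntegral_le_lyapunovFn (hP : P.PosSemidef)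
    (hterm : ∀ j ∈ s, ∀ i τ, 0 ≤ Λ j i i * ∫ ν in (0 : ℝ)..τ, g j i ν) {j : κ} (hj : j ∈ s)
    (i : Fin n) (x : EuclideanSpace ℝ (Fin n)) :
    2 * (Λ j i i * ∫ ν in (0 : ℝ)..x i, g j i ν) ≤ lyapunovFn P Λ g s x := by
  have hinner := single_le_sum (fun i _ => hterm j hj i (x i)) (mem_univ i)
  have houter := single_le_sum
    (f := fun j => ∑ i, Λ j i i * ∫ ν in (0 : ℝ)..x i, g j i ν)
    (fun j hj => sum_nonneg fun i _ => hterm j hj i (x i)) hj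
  have hquad : 0 ≤ x ⬝ᵥ P *ᵥ x := by simpa using hP.dotProduct_mulVec_nonneg x.ofLp
  rw [lyapunovFn]
  linarith

theorem dotProduct_mulVec_add_smul_sum (hΛ : ∀ j ∈ t, IsNonnegDiag (Λ j)) (ρ : ℝ)
    (x : Fin n → ℝ) :
    x ⬝ᵥ (P + ρ • ∑ j ∈ t, Λ j) *ᵥ x = x ⬝ᵥ P *ᵥ x + ρ * ∑ j ∈ t, ∑ i, Λ j i i * x i ^ 2 := by
  rw [add_mulVec, smul_mulVec, sum_mulVec, dotProduct_add, dotProduct_smul, dotProduct_sum,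
    smul_eq_mul]
  congr 2
  exact sum_congr rfl fun j hj => (hΛ j hj).dotProduct_mulVec_self x

theorem lyapunovFn_pos (hP : P.PosSemidef) (hΛ : ∀ j ∈ s, IsNonnegDiag (Λ j))
    (hcont : ∀ j ∈ s, ∀ i, Continuous (g j i))
    (hsector : ∀ j ∈ s, ∀ i ν, ν ≠ 0 → 0 < ν * g j i ν) (hts : t ⊆ s) {ρ : ℝ}
    (hPd : (P + ρ • ∑ j ∈ t, Λ j).PosDef) {x : EuclideanSpace ℝ (Fin n)} (hx : x ≠ 0) :
    0 < lyapunovFn P Λ g s x := by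
  by_contra! hV
  have hterm := diag_mul_intervalIntegral_nonneg hΛ hcont hsector
  have hquad : x ⬝ᵥ P *ᵥ x = 0 := le_antisymm ((dotProduct_mulVec_le_lyapunovFn hterm x).trans hV)
    (by simpa using hP.dotProduct_mulVec_nonneg x.ofLp)
  have hdiag : ∀ j ∈ t, ∀ i, Λ j i i * x i ^ 2 = 0 := by
    intro j hj i
    have hzero : Λ j i i * ∫ ν in (0 : ℝ)..x i, g j i ν = 0 := le_antisymm
      (by linarith [two_mul_diag_mul_intervalIntegral_le_lyapunovFn hP hterm (hts hj) i x])
      (hterm j (hts hj) i _)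
    rcases mul_eq_zero.1 hzero with hΛ0 | hint
    · rw [hΛ0, zero_mul]
    · have hxi : x i = 0 := by
        by_contra hxi
        exact (intervalIntegral_pos_of_sector (hcont j (hts hj) i) (hsector j (hts hj) i) hxi).ne'
          hint
      rw [hxi, sq, mul_zero, mul_zero]
  have hQ := hPd.dotProduct_mulVec_pos ((WithLp.ofLp_eq_zero 2).not.2 hx)
  rw [star_trivial, dotProduct_mulVec_add_smul_sum (fun j hj => hΛ j (hts hj)), hquad,
    sum_eq_zero fun j hj => sum_eq_zero fun i _ => hdiag j hj i] at hQ
  simp at hQ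

theorem dotProduct_mulVec_add_smul_sum_sub_le_lyapunovFn (hΛ : ∀ j ∈ s, IsNonnegDiag (Λ j))
    (hterm : ∀ j ∈ s, ∀ i τ, 0 ≤ Λ j i i * ∫ ν in (0 : ℝ)..τ, g j i ν) (hts : t ⊆ s) (ρ : ℝ)
    {K : ℝ} {x : EuclideanSpace ℝ (Fin n)} (hxK : ∀ j ∈ t, ∀ i, 0 < Λ j i i → |x i| < K) :
    x ⬝ᵥ (P + ρ • ∑ j ∈ t, Λ j) *ᵥ x - |ρ| * ∑ j ∈ t, ∑ i, Λ j i i * K ^ 2 ≤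
      lyapunovFn P Λ g s x := by
  have hsmall : ∑ j ∈ t, ∑ i, Λ j i i * x i ^ 2 ≤ ∑ j ∈ t, ∑ i, Λ j i i * K ^ 2 := by
    refine sum_le_sum fun j hj => sum_le_sum fun i _ => ?_
    rcases ((hΛ j (hts hj)).diag_nonneg i).eq_or_lt with hΛ0 | hpos
    · simp [← hΛ0]
    · rw [← sq_abs (x i)]
      exact mul_le_mul_of_nonneg_left (pow_le_pow_left₀ (abs_nonneg _) (hxK j hj i hpos).le 2)
        hpos.le
  have hS : 0 ≤ ∑ j ∈ t, ∑ i, Λ j i i * x i ^ 2 := sum_nonneg fun j hj => sum_nonneg fun i _ =>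
    mul_nonneg ((hΛ j (hts hj)).diag_nonneg i) (sq_nonneg _)
  have hρ := mul_le_mul_of_nonneg_right (le_abs_self ρ) hS
  have hρK := mul_le_mul_of_nonneg_left hsmall (abs_nonneg ρ)
  rw [dotProduct_mulVec_add_smul_sum (fun j hj => hΛ j (hts hj))]
  linarith [dotProduct_mulVec_le_lyapunovFn (P := P) hterm x]

theorem tendsto_lyapunovFn_cocompact (hP : P.PosSemidef) (hΛ : ∀ j ∈ s, IsNonnegDiag (Λ j))
    (hcont : ∀ j ∈ s, ∀ i, Continuous (g j i))
    (hsector : ∀ j ∈ s, ∀ i ν, ν ≠ 0 → 0 < ν * g j i ν) (hts : t ⊆ s)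
    (hdiv : ∀ j ∈ t, ∀ i, Tendsto (fun τ => ∫ ν in (0 : ℝ)..τ, g j i ν) (cocompact ℝ) atTop)
    {ρ : ℝ} (hPd : (P + ρ • ∑ j ∈ t, Λ j).PosDef) :
    Tendsto (lyapunovFn P Λ g s) (cocompact (EuclideanSpace ℝ (Fin n))) atTop := by
  have hterm := diag_mul_intervalIntegral_nonneg hΛ hcont hsector
  obtain ⟨c, hc, hcx⟩ := hPd.exists_mul_norm_sq_le
  refine tendsto_atTop.2 fun C => ?_
  have hlarge : ∀ᶠ τ in cocompact ℝ, ∀ j ∈ t, ∀ i, 0 < Λ j i i →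
      C ≤ 2 * (Λ j i i * ∫ ν in (0 : ℝ)..τ, g j i ν) := by
    refine (eventually_all_finset t).2 fun j hj => eventually_all.2 fun i => ?_
    by_cases hpos : 0 < Λ j i i
    · filter_upwards [((hdiv j hj i).const_mul_atTop (by positivity : (0 : ℝ) < 2 * Λ j i i)
        ).eventually_ge_atTop C] with τ hτ _
      linarith
    · exact Eventually.of_forall fun τ h => absurd h hpos
  obtain ⟨K, hK⟩ := exists_forall_le_norm_of_eventually_cocompact hlarge
  set D := |ρ| * ∑ j ∈ t, ∑ i, Λ j i i * K ^ 2
  have hquad : Tendsto (fun x : EuclideanSpace ℝ (Fin n) => c * ‖x‖ ^ 2 - D)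
      (cocompact _) atTop := tendsto_atTop_add_const_right _ _
    (((tendsto_pow_atTop two_ne_zero).const_mul_atTop hc).comp tendsto_norm_cocompact_atTop)
  filter_upwards [hquad.eventually_ge_atTop C] with x hx
  by_cases hbig : ∃ j ∈ t, ∃ i, 0 < Λ j i i ∧ K ≤ |x i|
  · obtain ⟨j, hj, i, hpos, hKx⟩ := hbig
    exact (hK (x i) (by rwa [Real.norm_eq_abs]) j hj i hpos).trans
      (two_mul_diag_mul_intervalIntegral_le_lyapunovFn hP hterm (hts hj) i x)
  simp only [not_exists, not_and, not_le] at hbig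
  calc C ≤ c * ‖x‖ ^ 2 - D := hx
    _ ≤ x ⬝ᵥ (P + ρ • ∑ j ∈ t, Λ j) *ᵥ x - D := by gcongr; exact hcx x
    _ ≤ lyapunovFn P Λ g s x := dotProduct_mulVec_add_smul_sum_sub_le_lyapunovFn hΛ hterm hts ρ hbig

end Lyapunov

theorem lyapunov_classKInf_bounds_general
    (n M : ℕ)
    (g : ℕ → Fin n → ℝ → ℝ)
    (hcont : ∀ j, 1 ≤ j → j ≤ M → ∀ i, Continuous (g j i))
    (hsector : ∀ j, 1 ≤ j → j ≤ M → ∀ i, ∀ ν : ℝ, ν ≠ 0 → 0 < ν * g j i ν)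
    (μ : ℕ) (hμM : μ ≤ M)
    (hintdiv : ∀ j, 1 ≤ j → j ≤ μ → ∀ i,
      Tendsto (fun ν => ∫ r in (0:ℝ)..ν, g j i r) atTop atTop ∧
      Tendsto (fun ν => ∫ r in (0:ℝ)..ν, g j i r) atBot atTop)
    (P : Matrix (Fin n) (Fin n) ℝ) (hP : P.PosSemidef)
    (Λ : ℕ → Matrix (Fin n) (Fin n) ℝ)
    (hΛ : ∀ j, 1 ≤ j → j ≤ M → IsNonnegDiag (Λ j))
    (ρ : ℝ)
    (hPd : (P + ρ • ∑ j ∈ Finset.Icc 1 μ, Λ j).PosDef)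
    (V : EuclideanSpace ℝ (Fin n) → ℝ)
    (hV : ∀ x : EuclideanSpace ℝ (Fin n),
      V x = x ⬝ᵥ P.mulVec x +
        2 * ∑ j ∈ Finset.Icc 1 M, ∑ i, Λ j i i * ∫ ν in (0:ℝ)..(x i), g j i ν) :
    ∃ α₁ α₂ : ℝ → ℝ, IsClassKInf α₁ ∧ IsClassKInf α₂ ∧
      ∀ x : EuclideanSpace ℝ (Fin n), α₁ ‖x‖ ≤ V x ∧ V x ≤ α₂ ‖x‖ := by
  obtain rfl : V = lyapunovFn P Λ g (Icc 1 M) := funext hV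
  have hcont' : ∀ j ∈ Icc 1 M, ∀ i, Continuous (g j i) := fun j hj =>
    hcont j (mem_Icc.1 hj).1 (mem_Icc.1 hj).2
  have hsector' : ∀ j ∈ Icc 1 M, ∀ i ν, ν ≠ 0 → 0 < ν * g j i ν := fun j hj =>
    hsector j (mem_Icc.1 hj).1 (mem_Icc.1 hj).2
  have hΛ' : ∀ j ∈ Icc 1 M, IsNonnegDiag (Λ j) := fun j hj => hΛ j (mem_Icc.1 hj).1 (mem_Icc.1 hj).2
  have hdiv : ∀ j ∈ Icc 1 μ, ∀ i,
      Tendsto (fun τ => ∫ ν in (0 : ℝ)..τ, g j i ν) (cocompact ℝ) atTop := fun j hj i => by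
    obtain ⟨hTop, hBot⟩ := hintdiv j (mem_Icc.1 hj).1 (mem_Icc.1 hj).2 i
    rw [cocompact_eq_atBot_atTop]
    exact hBot.sup hTop
  have hts : Icc 1 μ ⊆ Icc 1 M := Icc_subset_Icc_right hμM
  exact exists_classKInf_sandwich (continuous_lyapunovFn hcont') lyapunovFn_zero
    (fun x hx => lyapunovFn_pos hP hΛ' hcont' hsector' hts hPd hx)
    (tendsto_lyapunovFn_cocompact hP hΛ' hcont' hsector' hts hdiv hPd)

/-- **Class-`K∞` sandwich bounds for the Lyapunov function**
`V(x) = xᵀ P x + 2 ∑_{j=1}^M ∑_{i=1}^n Λᵢʲ ∫₀^{xᵢ} f_jⁱ(ν) dν`,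
where the diagonal continuous nonlinearities `f_jⁱ = g j i` satisfy the sector condition,
the nonlinearities with index `j ≤ μ` have divergent integrals, `P` is symmetric positive
semidefinite, the `Λʲ` are nonnegative diagonal matrices, and `P + ρ ∑_{j=1}^μ Λʲ` is
positive definite for some real `ρ`. -/
theorem lyapunov_classKInf_bounds
    (n M : ℕ) (hM : 1 ≤ M)
    (g : ℕ → Fin n → ℝ → ℝ)
    (hcont : ∀ j, 1 ≤ j → j ≤ M → ∀ i, Continuous (g j i))
    (hsector : ∀ j, 1 ≤ j → j ≤ M → ∀ i, ∀ ν : ℝ, ν ≠ 0 → 0 < ν * g j i ν)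
    (μ : ℕ) (hμ1 : 1 ≤ μ) (hμM : μ ≤ M)
    (hintdiv : ∀ j, 1 ≤ j → j ≤ μ → ∀ i,
      Tendsto (fun ν => ∫ r in (0:ℝ)..ν, g j i r) atTop atTop ∧
      Tendsto (fun ν => ∫ r in (0:ℝ)..ν, g j i r) atBot atTop)
    (P : Matrix (Fin n) (Fin n) ℝ) (hP : P.PosSemidef)
    (Λ : ℕ → Matrix (Fin n) (Fin n) ℝ)
    (hΛ : ∀ j, 1 ≤ j → j ≤ M → IsNonnegDiag (Λ j))
    (ρ : ℝ)
    (hPd : (P + ρ • ∑ j ∈ Finset.Icc 1 μ, Λ j).PosDef)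
    (V : EuclideanSpace ℝ (Fin n) → ℝ)
    (hV : ∀ x : EuclideanSpace ℝ (Fin n),
      V x = x ⬝ᵥ P.mulVec x +
        2 * ∑ j ∈ Finset.Icc 1 M, ∑ i, Λ j i i * ∫ ν in (0:ℝ)..(x i), g j i ν) :
    ∃ α₁ α₂ : ℝ → ℝ, IsClassKInf α₁ ∧ IsClassKInf α₂ ∧
      ∀ x : EuclideanSpace ℝ (Fin n), α₁ ‖x‖ ≤ V x ∧ V x ≤ α₂ ‖x‖ :=
  lyapunov_classKInf_bounds_general n M g hcont hsector μ hμM hintdiv P hP Λ hΛ ρ hPd V hV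
end

section
/- Let x : [0,T) → ℝⁿ be a differentiable solution of ẋ(t) = ∑_{j=1}^{M} Γ_j f_j(x(t)) + B u(t), where the f_j are diagonal continuous nonlinearities, Γ_j ∈ ℝ^{n×n}, B ∈ ℝ^{n×m}, and u : [0,T) → ℝ^m is continuous. Let P ∈ ℝ^{n×n} be symmetric, Λ^j = diag(Λ_1^j,…,Λ_n^j), Ξ^j (j ∈ {1,…,M}) and Υ_{s,z} (0 ≤ s < z ≤ M) be diagonal matrices, and Φ ∈ ℝ^{n×n} symmetric. Define V(x) = x^⊤ P x + 2 ∑_{j=1}^{M} ∑_{i=1}^{n} Λ_i^j ∫_0^{x_i} f_j^i(ν) dν, and the block matrix Q = (Q_{a,b})_{a,b=1}^{M+2} with Q_{1,1} = 0, Q_{1,j+1} = P Γ_j + Υ_{0,j}, Q_{1,M+2} = P, Q_{j+1,j+1} = Γ_j^⊤ Λ^j + Λ^j Γ_j + Ξ^j, Q_{s+1,z+1} = Γ_s^⊤ Λ^z + Λ^s Γ_z + Υ_{s,z} for 1 ≤ s < z ≤ M, Q_{j+1,M+2} = Λ^j, Q_{M+2,M+2} = −Φ. Then t ↦ V(x(t))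 is differentiable on [0,T) and, with ξ(t) = [x(t); f_1(x(t)); …; f_M(x(t)); B u(t)] ∈ ℝ^{n(M+2)}, d/dt V(x(t)) = ξ(t)^⊤ Q ξ(t) − ∑_{j=1}^{M} f_j(x(t))^⊤ Ξ^j f_j(x(t)) − 2 ∑_{j=1}^{M} x(t)^⊤ Υ_{0,j} f_j(x(t)) − 2 ∑_{s=1}^{M−1} ∑_{z=s+1}^{M} f_s(x(t))^⊤ Υ_{s,z} f_z(x(t)) + (B u(t))^⊤ Φ (B u(t)). -/
/-!
Along a solution, the chain rule and the fundamental theorem of calculus give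
`V̇ = 2 xᵀ P ẋ + 2 ∑ⱼ fⱼᵀ Λʲ ẋ`, using that `P` is symmetric and each `Λʲ` diagonal.
Expanding `ξᵀ Q ξ` block by block, the symmetry of `Q` counts every off-diagonal block twice,
and after substituting `ẋ = ∑ⱼ Γⱼ fⱼ + B u` the two sides differ by exactly the `Ξ`, `Υ` and `Φ`
terms of the identity.
-/

open Finset Matrix

namespace Finset

theorem sum_sum_eq_sum_diag_add_sum_lt {α R : Type*} [LinearOrder α] [AddCommMonoid R]
    (s : Finset α) (T : α → α → R) :
    ∑ a ∈ s, ∑ b ∈ s, T a b = ∑ a ∈ s, T a a + ∑ a ∈ s, ∑ b ∈ s with a < b, (T a b + T b a) := by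
  have hsplit : ∀ a ∈ s, ∑ b ∈ s, T a b =
      T a a + ∑ b ∈ s with a < b, T a b + ∑ b ∈ s with b < a, T a b := by
    intro a ha
    have hdiag : T a a = ∑ b ∈ s, if a = b then T a b else 0 := by rw [sum_ite_eq, if_pos ha]
    rw [sum_filter, sum_filter, hdiag, ← sum_add_distrib, ← sum_add_distrib]
    refine sum_congr rfl fun b _ => ?_
    rcases lt_trichotomy a b with h | rfl | h
    · simp [h, h.ne, h.not_gt]
    · simp
    · simp [h, h.ne', h.not_gt]
  have hlower : ∑ a ∈ s, ∑ b ∈ s with b < a, T a b = ∑ a ∈ s, ∑ b ∈ s with a < b, T b a :=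
    sum_comm' fun a b => by simp only [mem_filter]; tauto
  rw [sum_congr rfl hsplit, sum_add_distrib, sum_add_distrib, hlower, add_assoc,
    ← sum_add_distrib]
  simp only [sum_add_distrib]

theorem sum_Icc_filter_lt (M : ℕ) {R : Type*} [AddCommMonoid R] (F : ℕ → ℕ → R) :
    ∑ a ∈ Icc 1 M, ∑ b ∈ Icc 1 M with a < b, F a b
      = ∑ s ∈ Icc 1 (M - 1), ∑ z ∈ Icc (s + 1) M, F s z := by
  have hfilter : ∀ a, {b ∈ Icc 1 M | a < b} = Icc (a + 1) M := fun a => by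
    ext b; simp only [mem_filter, mem_Icc]; omega
  simp only [hfilter]
  refine (sum_subset (fun a => by simp only [mem_Icc]; omega) fun a ha ha' => ?_).symm
  rw [Icc_eq_empty (by simp only [mem_Icc] at ha ha'; omega), sum_empty]

theorem sum_range_add_two (M : ℕ) {R : Type*} [AddCommMonoid R] (h : ℕ → R) :
    ∑ a ∈ range (M + 2), h a = h 0 + ∑ a ∈ Icc 1 M, h a + h (M + 1) := by
  have hrange : range (M + 2) = insert 0 (insert (M + 1) (Icc 1 M)) := by
    ext a; simp only [mem_range, mem_insert, mem_Icc]; omega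
  rw [hrange, sum_insert (by simp only [mem_insert, mem_Icc]; omega),
    sum_insert (by simp only [mem_Icc]; omega)]
  abel

theorem sum_range_add_two_sum_range_add_two_of_symm {R : Type*} [CommSemiring R] (M : ℕ)
    (S : ℕ → ℕ → R) (hS : ∀ a b, a ≤ M + 1 → b ≤ M + 1 → S b a = S a b) :
    ∑ a ∈ range (M + 2), ∑ b ∈ range (M + 2), S a b
      = S 0 0 + 2 * S 0 (M + 1) + S (M + 1) (M + 1)
        + 2 * ∑ j ∈ Icc 1 M, (S 0 j + S j (M + 1)) + ∑ j ∈ Icc 1 M, ∑ z ∈ Icc 1 M, S j z := by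
  have hS' : ∀ j ∈ Icc 1 M, S j 0 = S 0 j ∧ S (M + 1) j = S j (M + 1) := fun j hj => by
    rw [mem_Icc] at hj; exact ⟨hS 0 j (by omega) (by omega), hS j (M + 1) (by omega) le_rfl⟩
  simp only [sum_range_add_two, sum_add_distrib]
  rw [sum_congr rfl fun j hj => (hS' j hj).1, sum_congr rfl fun j hj => (hS' j hj).2,
    hS 0 (M + 1) (by omega) le_rfl]
  ring

end Finset

namespace Matrix

variable {ι R : Type*} [Fintype ι] [CommSemiring R]

theorem IsSymm.dotProduct_mulVec_comm {A : Matrix ι ι R} (hA : A.IsSymm) (v w : ι → R) :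
    v ⬝ᵥ A *ᵥ w = w ⬝ᵥ A *ᵥ v := by
  rw [← dotProduct_transpose_mulVec, hA.eq]

theorem IsSymm.dotProduct_transpose_mul_mulVec {Λ : Matrix ι ι R} (hΛ : Λ.IsSymm)
    (Γ : Matrix ι ι R) (v w : ι → R) :
    v ⬝ᵥ (Γᵀ * Λ) *ᵥ w = w ⬝ᵥ Λ *ᵥ Γ *ᵥ v := by
  rw [← mulVec_mulVec, dotProduct_transpose_mulVec, dotProduct_comm, hΛ.dotProduct_mulVec_comm]

theorem IsDiag.dotProduct_mulVec {A : Matrix ι ι R} (hA : A.IsDiag) (v w : ι → R) :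
    v ⬝ᵥ A *ᵥ w = ∑ i, A i i * (v i * w i) := by
  classical
  conv_lhs => rw [← hA.diagonal_diag]
  exact sum_congr rfl fun i _ => by rw [mulVec_diagonal, diag_apply]; ring

theorem dotProduct_mulVec_eq_sum_range_blocks {K : ℕ} {Q : Matrix (Fin K × ι) (Fin K × ι) R}
    {Qb : ℕ → ℕ → Matrix ι ι R}
    (hQ : ∀ (a b : Fin K) i k, Q (a, i) (b, k) = Qb a b i k) {ξ : Fin K × ι → R}
    {v : ℕ → ι → R} (hξ : ∀ (a : Fin K) i, ξ (a, i) = v a i) :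
    ξ ⬝ᵥ Q *ᵥ ξ = ∑ a ∈ range K, ∑ b ∈ range K, v a ⬝ᵥ Qb a b *ᵥ v b := by
  simp only [dotProduct, mulVec, Fintype.sum_prod_type, hQ, hξ, mul_sum]
  rw [← Fin.sum_univ_eq_sum_range (fun a => ∑ b ∈ range K, _)]
  refine sum_congr rfl fun a _ => ?_
  rw [← Fin.sum_univ_eq_sum_range (fun b => _)]
  exact sum_comm

end Matrix

section Derivatives

variable {ι : Type*} [Fintype ι] {t : ℝ}

theorem HasDerivAt.dotProduct {v w : ℝ → ι → ℝ} {v' w' : ι → ℝ} (hv : HasDerivAt v v' t)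
    (hw : HasDerivAt w w' t) :
    HasDerivAt (fun s => v s ⬝ᵥ w s) (v' ⬝ᵥ w t + v t ⬝ᵥ w') t := by
  have h := HasDerivAt.fun_sum (u := univ) fun i _ =>
    (hasDerivAt_pi.1 hv i).fun_mul (hasDerivAt_pi.1 hw i)
  rw [sum_add_distrib] at h
  exact h

theorem HasDerivAt.matrix_mulVec {κ : Type*} (A : Matrix κ ι ℝ) {v : ℝ → ι → ℝ} {v' : ι → ℝ}
    (hv : HasDerivAt v v' t) : HasDerivAt (fun s => A *ᵥ v s) (A *ᵥ v') t :=
  hasDerivAt_pi.2 fun k => by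
    have := (hasDerivAt_const t (A k)).dotProduct hv
    rwa [zero_dotProduct, zero_add] at this

theorem HasDerivAt.dotProduct_mulVec_self {P : Matrix ι ι ℝ} (hP : P.IsSymm) {v : ℝ → ι → ℝ}
    {v' : ι → ℝ} (hv : HasDerivAt v v' t) :
    HasDerivAt (fun s => v s ⬝ᵥ P *ᵥ v s) (2 * (v t ⬝ᵥ P *ᵥ v')) t := by
  convert hv.dotProduct (hv.matrix_mulVec P) using 1
  rw [hP.dotProduct_mulVec_comm v', two_mul]

theorem HasDerivAt.integral_zero_comp {f : ℝ → ℝ} (hf : Continuous f) {y : ℝ → ℝ} {y' : ℝ}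
    (hy : HasDerivAt y y' t) :
    HasDerivAt (fun s => ∫ ν in (0 : ℝ)..y s, f ν) (f (y t) * y') t :=
  (hf.integral_hasStrictDerivAt 0 (y t)).hasDerivAt.comp t hy

theorem HasDerivAt.sum_diag_mul_integral {Λ : Matrix ι ι ℝ} (hΛ : Λ.IsDiag) {g : ι → ℝ → ℝ}
    (hg : ∀ i, Continuous (g i)) {v : ℝ → ι → ℝ} {v' : ι → ℝ} (hv : HasDerivAt v v' t) :
    HasDerivAt (fun s => ∑ i, Λ i i * ∫ ν in (0 : ℝ)..v s i, g i ν)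
      ((fun i => g i (v t i)) ⬝ᵥ Λ *ᵥ v') t := by
  rw [hΛ.dotProduct_mulVec]
  exact HasDerivAt.fun_sum fun i _ =>
    ((hasDerivAt_pi.1 hv i).integral_zero_comp (hg i)).const_mul (Λ i i)

theorem HasDerivAt.dotProduct_mulVec_self_add_sum_integral {M : ℕ} {P : Matrix ι ι ℝ}
    (hP : P.IsSymm) {Λ : ℕ → Matrix ι ι ℝ} (hΛ : ∀ j, 1 ≤ j → j ≤ M → (Λ j).IsDiag)
    {g : ℕ → ι → ℝ → ℝ} (hg : ∀ j, 1 ≤ j → j ≤ M → ∀ i, Continuous (g j i))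
    {x : ℝ → ι → ℝ} {d : ι → ℝ} (hx : HasDerivAt x d t) :
    HasDerivAt
      (fun s => x s ⬝ᵥ P *ᵥ x s + 2 * ∑ j ∈ Icc 1 M, ∑ i, Λ j i i * ∫ ν in (0 : ℝ)..x s i, g j i ν)
      (2 * (x t ⬝ᵥ P *ᵥ d) + 2 * ∑ j ∈ Icc 1 M, (fun i => g j i (x t i)) ⬝ᵥ Λ j *ᵥ d) t := by
  refine (hx.dotProduct_mulVec_self hP).add (HasDerivAt.const_mul 2 (HasDerivAt.fun_sum ?_))
  intro j hj
  obtain ⟨h1, h2⟩ := mem_Icc.1 hj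
  exact hx.sum_diag_mul_integral (hΛ j h1 h2) (hg j h1 h2)

end Derivatives

def stackedBlock {ι R : Type*} (M : ℕ) (x : ι → R) (f : ℕ → ι → R) (w : ι → R) (a : ℕ) : ι → R :=
  if a = 0 then x else if a ≤ M then f a else w

section BlockQuadraticForm

variable {ι R : Type*} [Fintype ι] [CommRing R] {M : ℕ} {Γ Λ Ξ : ℕ → Matrix ι ι R}
  {Υ : ℕ → ℕ → Matrix ι ι R} {P Φ : Matrix ι ι R} {Qb : ℕ → ℕ → Matrix ι ι R}

theorem sum_Icc_sum_Icc_dotProduct_mulVec_blocks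
    (hΛ : ∀ j, 1 ≤ j → j ≤ M → (Λ j).IsSymm)
    (hQbjj : ∀ j, 1 ≤ j → j ≤ M → Qb j j = (Γ j)ᵀ * Λ j + Λ j * Γ j + Ξ j)
    (hQbsz : ∀ s z, 1 ≤ s → s < z → z ≤ M → Qb s z = (Γ s)ᵀ * Λ z + Λ s * Γ z + Υ s z)
    (hQbsym : ∀ a b, a ≤ M + 1 → b ≤ M + 1 → Qb b a = (Qb a b)ᵀ) (f : ℕ → ι → R) :
    ∑ j ∈ Icc 1 M, ∑ z ∈ Icc 1 M, f j ⬝ᵥ Qb j z *ᵥ f z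
      = 2 * ∑ j ∈ Icc 1 M, ∑ z ∈ Icc 1 M, f j ⬝ᵥ Λ j *ᵥ Γ z *ᵥ f z
        + ∑ j ∈ Icc 1 M, f j ⬝ᵥ Ξ j *ᵥ f j
        + 2 * ∑ s ∈ Icc 1 (M - 1), ∑ z ∈ Icc (s + 1) M, f s ⬝ᵥ Υ s z *ᵥ f z := by
  have hdiag : ∀ j ∈ Icc 1 M, f j ⬝ᵥ Qb j j *ᵥ f j
      = 2 * f j ⬝ᵥ Λ j *ᵥ Γ j *ᵥ f j + f j ⬝ᵥ Ξ j *ᵥ f j := fun j hj => by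
    obtain ⟨h1, h2⟩ := mem_Icc.1 hj
    rw [hQbjj j h1 h2, add_mulVec, add_mulVec, dotProduct_add, dotProduct_add,
      (hΛ j h1 h2).dotProduct_transpose_mul_mulVec, ← mulVec_mulVec]
    ring
  have hoff : ∀ s z, 1 ≤ s → s < z → z ≤ M →
      f s ⬝ᵥ Qb s z *ᵥ f z + f z ⬝ᵥ Qb z s *ᵥ f s
        = 2 * (f s ⬝ᵥ Λ s *ᵥ Γ z *ᵥ f z + f z ⬝ᵥ Λ z *ᵥ Γ s *ᵥ f s)
          + 2 * f s ⬝ᵥ Υ s z *ᵥ f z := fun s z hs1 hsz hzM => by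
    rw [hQbsym s z (by omega) (by omega), dotProduct_transpose_mulVec,
      hQbsz s z hs1 hsz hzM, add_mulVec, add_mulVec, dotProduct_add, dotProduct_add,
      (hΛ z (by omega) hzM).dotProduct_transpose_mul_mulVec, ← mulVec_mulVec]
    ring
  rw [sum_sum_eq_sum_diag_add_sum_lt,
    sum_sum_eq_sum_diag_add_sum_lt (T := fun j z => f j ⬝ᵥ Λ j *ᵥ Γ z *ᵥ f z),
    sum_congr rfl hdiag, sum_congr rfl fun s hs => sum_congr rfl fun z hz => by
      simp only [mem_filter, mem_Icc] at hs hz; exact hoff s z hs.1 hz.2 hz.1.2,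
    sum_Icc_filter_lt, sum_Icc_filter_lt]
  simp only [sum_add_distrib, mul_sum, mul_add]
  ring

theorem sum_range_dotProduct_mulVec_stackedBlock
    (hΛ : ∀ j, 1 ≤ j → j ≤ M → (Λ j).IsSymm)
    (hQb00 : Qb 0 0 = 0)
    (hQb0j : ∀ j, 1 ≤ j → j ≤ M → Qb 0 j = P * Γ j + Υ 0 j)
    (hQb0last : Qb 0 (M + 1) = P)
    (hQbjj : ∀ j, 1 ≤ j → j ≤ M → Qb j j = (Γ j)ᵀ * Λ j + Λ j * Γ j + Ξ j)
    (hQbsz : ∀ s z, 1 ≤ s → s < z → z ≤ M → Qb s z = (Γ s)ᵀ * Λ z + Λ s * Γ z + Υ s z)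
    (hQbjlast : ∀ j, 1 ≤ j → j ≤ M → Qb j (M + 1) = Λ j)
    (hQblast : Qb (M + 1) (M + 1) = -Φ)
    (hQbsym : ∀ a b, a ≤ M + 1 → b ≤ M + 1 → Qb b a = (Qb a b)ᵀ)
    (x w : ι → R) (f : ℕ → ι → R) :
    ∑ a ∈ range (M + 2), ∑ b ∈ range (M + 2),
        stackedBlock M x f w a ⬝ᵥ Qb a b *ᵥ stackedBlock M x f w b
      = 2 * (x ⬝ᵥ P *ᵥ (∑ j ∈ Icc 1 M, Γ j *ᵥ f j + w))
        + 2 * ∑ j ∈ Icc 1 M, f j ⬝ᵥ Λ j *ᵥ (∑ z ∈ Icc 1 M, Γ z *ᵥ f z + w)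
        + ∑ j ∈ Icc 1 M, f j ⬝ᵥ Ξ j *ᵥ f j
        + 2 * ∑ j ∈ Icc 1 M, x ⬝ᵥ Υ 0 j *ᵥ f j
        + 2 * ∑ s ∈ Icc 1 (M - 1), ∑ z ∈ Icc (s + 1) M, f s ⬝ᵥ Υ s z *ᵥ f z
        - w ⬝ᵥ Φ *ᵥ w := by
  have hx : stackedBlock M x f w 0 = x := if_pos rfl
  have hf : ∀ j ∈ Icc 1 M, stackedBlock M x f w j = f j := fun j hj => by
    rw [mem_Icc] at hj; exact (if_neg (by omega)).trans (if_pos hj.2)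
  have hw : stackedBlock M x f w (M + 1) = w := (if_neg (by omega)).trans (if_neg (by omega))
  rw [sum_range_add_two_sum_range_add_two_of_symm M _ fun a b ha hb => by
      rw [hQbsym a b ha hb, dotProduct_transpose_mulVec],
    hx, hw, hQb00, hQb0last, hQblast,
    sum_congr rfl fun j hj => by
      obtain ⟨h1, h2⟩ := mem_Icc.1 hj; rw [hf j hj, hQb0j j h1 h2, hQbjlast j h1 h2],
    sum_congr rfl fun j hj => sum_congr rfl fun z hz => by rw [hf j hj, hf z hz],
    sum_Icc_sum_Icc_dotProduct_mulVec_blocks hΛ hQbjj hQbsz hQbsym]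
  simp only [mulVec_add, mulVec_sum, dotProduct_add, dotProduct_sum, add_mulVec, ← mulVec_mulVec,
    neg_mulVec, dotProduct_neg, zero_mulVec, dotProduct_zero, sum_add_distrib, mul_add, mul_sum]
  ring

end BlockQuadraticForm

theorem lyapunov_derivative_identity_general
    (n m M : ℕ)
    (Γ : ℕ → Matrix (Fin n) (Fin n) ℝ) (B : Matrix (Fin n) (Fin m) ℝ)
    (g : ℕ → Fin n → ℝ → ℝ)
    (hcont : ∀ j, 1 ≤ j → j ≤ M → ∀ i, Continuous (g j i))
    (P : Matrix (Fin n) (Fin n) ℝ) (hPsymm : P.IsSymm)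
    (Λ Ξ : ℕ → Matrix (Fin n) (Fin n) ℝ) (Υ : ℕ → ℕ → Matrix (Fin n) (Fin n) ℝ)
    (hΛ : ∀ j, 1 ≤ j → j ≤ M → (Λ j).IsDiag)
    (Φ : Matrix (Fin n) (Fin n) ℝ)
    -- the Lyapunov function V
    (V : (Fin n → ℝ) → ℝ)
    (hV : ∀ y : Fin n → ℝ,
      V y = y ⬝ᵥ P.mulVec y +
        2 * ∑ j ∈ Finset.Icc 1 M, ∑ i, Λ j i i * ∫ ν in (0:ℝ)..(y i), g j i ν)
    -- the block matrix Q
    (Qb : ℕ → ℕ → Matrix (Fin n) (Fin n) ℝ)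
    (Q : Matrix (Fin (M + 2) × Fin n) (Fin (M + 2) × Fin n) ℝ)
    (hQ : ∀ (a b : Fin (M + 2)) (i k : Fin n), Q (a, i) (b, k) = Qb a.val b.val i k)
    (hQb00 : Qb 0 0 = 0)
    (hQb0j : ∀ j, 1 ≤ j → j ≤ M → Qb 0 j = P * Γ j + Υ 0 j)
    (hQb0last : Qb 0 (M + 1) = P)
    (hQbjj : ∀ j, 1 ≤ j → j ≤ M → Qb j j = (Γ j)ᵀ * Λ j + Λ j * Γ j + Ξ j)
    (hQbsz : ∀ s z, 1 ≤ s → s < z → z ≤ M → Qb s z = (Γ s)ᵀ * Λ z + Λ s * Γ z + Υ s z)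
    (hQbjlast : ∀ j, 1 ≤ j → j ≤ M → Qb j (M + 1) = Λ j)
    (hQblast : Qb (M + 1) (M + 1) = -Φ)
    (hQbsym : ∀ a b, a ≤ M + 1 → b ≤ M + 1 → Qb b a = (Qb a b)ᵀ)
    -- a solution on [0, T) with continuous input
    (T : ℝ) (u : ℝ → Fin m → ℝ)
    (x : ℝ → Fin n → ℝ)
    (hx : ∀ t ∈ Set.Ico 0 T, HasDerivAt x
      (∑ j ∈ Finset.Icc 1 M, (Γ j).mulVec (fun i => g j i (x t i)) + B.mulVec (u t)) t)
    -- the extended vector ξ(t) = [x(t); f_1(x(t)); …; f_M(x(t)); B u(t)]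
    (ξ : ℝ → Fin (M + 2) × Fin n → ℝ)
    (hξ : ∀ t (p : Fin (M + 2) × Fin n),
      ξ t p = if (p.1 : ℕ) = 0 then x t p.2
        else if (p.1 : ℕ) ≤ M then g p.1 p.2 (x t p.2)
        else B.mulVec (u t) p.2) :
    ∀ t ∈ Set.Ico 0 T, HasDerivAt (fun s => V (x s))
      (ξ t ⬝ᵥ Q.mulVec (ξ t)
        - ∑ j ∈ Finset.Icc 1 M,
            (fun i => g j i (x t i)) ⬝ᵥ (Ξ j).mulVec (fun i => g j i (x t i))
        - 2 * ∑ j ∈ Finset.Icc 1 M, x t ⬝ᵥ (Υ 0 j).mulVec (fun i => g j i (x t i))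
        - 2 * ∑ s ∈ Finset.Icc 1 (M - 1), ∑ z ∈ Finset.Icc (s + 1) M,
            (fun i => g s i (x t i)) ⬝ᵥ (Υ s z).mulVec (fun i => g z i (x t i))
        + B.mulVec (u t) ⬝ᵥ Φ.mulVec (B.mulVec (u t))) t := by
  intro t ht
  set f : ℕ → Fin n → ℝ := fun j i => g j i (x t i)
  have hξ_blocks : ∀ (a : Fin (M + 2)) i, ξ t (a, i) = stackedBlock M (x t) f (B *ᵥ u t) a i :=
    fun a i => by rw [hξ]; unfold stackedBlock; split_ifs <;> rfl
  have hVx : (fun s => V (x s)) = fun s => x s ⬝ᵥ P *ᵥ x s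
      + 2 * ∑ j ∈ Icc 1 M, ∑ i, Λ j i i * ∫ ν in (0 : ℝ)..x s i, g j i ν :=
    funext fun s => hV (x s)
  rw [hVx, dotProduct_mulVec_eq_sum_range_blocks hQ hξ_blocks,
    sum_range_dotProduct_mulVec_stackedBlock (fun j h1 h2 => (hΛ j h1 h2).isSymm) hQb00 hQb0j
      hQb0last hQbjj hQbsz hQbjlast hQblast hQbsym]
  convert (hx t ht).dotProduct_mulVec_self_add_sum_integral hPsymm hΛ hcont using 1
  ring

/-- **Derivative identity for the Lyapunov function along solutions** of
`ẋ = ∑_{j=1}^M Γ_j f_j(x) + B u` (the computation of `V̇` in the proof of Theorem 1).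
With `V(x) = xᵀ P x + 2 ∑_j ∑_i Λᵢʲ ∫₀^{xᵢ} f_jⁱ`, the extended vector
`ξ = [x; f_1(x); …; f_M(x); Bu]` and the block matrix `Q` as in the statement,
`d/dt V(x(t)) = ξᵀ Q ξ − ∑_j f_jᵀ Ξʲ f_j − 2 ∑_j xᵀ Υ₀ⱼ f_j
  − 2 ∑_{s<z} f_sᵀ Υ_{s,z} f_z + (Bu)ᵀ Φ (Bu)`. -/
theorem lyapunov_derivative_identity
    (n m M : ℕ) (hM : 1 ≤ M)
    (Γ : ℕ → Matrix (Fin n) (Fin n) ℝ) (B : Matrix (Fin n) (Fin m) ℝ)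
    (g : ℕ → Fin n → ℝ → ℝ)
    (hcont : ∀ j, 1 ≤ j → j ≤ M → ∀ i, Continuous (g j i))
    (P : Matrix (Fin n) (Fin n) ℝ) (hPsymm : P.IsSymm)
    (Λ Ξ : ℕ → Matrix (Fin n) (Fin n) ℝ) (Υ : ℕ → ℕ → Matrix (Fin n) (Fin n) ℝ)
    (hΛ : ∀ j, 1 ≤ j → j ≤ M → (Λ j).IsDiag)
    (hΞ : ∀ j, 1 ≤ j → j ≤ M → (Ξ j).IsDiag)
    (hΥ : ∀ s z, s < z → z ≤ M → (Υ s z).IsDiag)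
    (Φ : Matrix (Fin n) (Fin n) ℝ) (hΦsymm : Φ.IsSymm)
    -- the Lyapunov function V
    (V : (Fin n → ℝ) → ℝ)
    (hV : ∀ y : Fin n → ℝ,
      V y = y ⬝ᵥ P.mulVec y +
        2 * ∑ j ∈ Finset.Icc 1 M, ∑ i, Λ j i i * ∫ ν in (0:ℝ)..(y i), g j i ν)
    -- the block matrix Q
    (Qb : ℕ → ℕ → Matrix (Fin n) (Fin n) ℝ)
    (Q : Matrix (Fin (M + 2) × Fin n) (Fin (M + 2) × Fin n) ℝ)
    (hQ : ∀ (a b : Fin (M + 2)) (i k : Fin n), Q (a, i) (b, k) = Qb a.val b.val i k)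
    (hQb00 : Qb 0 0 = 0)
    (hQb0j : ∀ j, 1 ≤ j → j ≤ M → Qb 0 j = P * Γ j + Υ 0 j)
    (hQb0last : Qb 0 (M + 1) = P)
    (hQbjj : ∀ j, 1 ≤ j → j ≤ M → Qb j j = (Γ j)ᵀ * Λ j + Λ j * Γ j + Ξ j)
    (hQbsz : ∀ s z, 1 ≤ s → s < z → z ≤ M → Qb s z = (Γ s)ᵀ * Λ z + Λ s * Γ z + Υ s z)
    (hQbjlast : ∀ j, 1 ≤ j → j ≤ M → Qb j (M + 1) = Λ j)
    (hQblast : Qb (M + 1) (M + 1) = -Φ)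
    (hQbsym : ∀ a b, a ≤ M + 1 → b ≤ M + 1 → Qb b a = (Qb a b)ᵀ)
    -- a solution on [0, T) with continuous input
    (T : ℝ) (u : ℝ → Fin m → ℝ) (hu : Continuous u)
    (x : ℝ → Fin n → ℝ)
    (hx : ∀ t ∈ Set.Ico 0 T, HasDerivAt x
      (∑ j ∈ Finset.Icc 1 M, (Γ j).mulVec (fun i => g j i (x t i)) + B.mulVec (u t)) t)
    -- the extended vector ξ(t) = [x(t); f_1(x(t)); …; f_M(x(t)); B u(t)]
    (ξ : ℝ → Fin (M + 2) × Fin n → ℝ)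
    (hξ : ∀ t (p : Fin (M + 2) × Fin n),
      ξ t p = if (p.1 : ℕ) = 0 then x t p.2
        else if (p.1 : ℕ) ≤ M then g p.1 p.2 (x t p.2)
        else B.mulVec (u t) p.2) :
    ∀ t ∈ Set.Ico 0 T, HasDerivAt (fun s => V (x s))
      (ξ t ⬝ᵥ Q.mulVec (ξ t)
        - ∑ j ∈ Finset.Icc 1 M,
            (fun i => g j i (x t i)) ⬝ᵥ (Ξ j).mulVec (fun i => g j i (x t i))
        - 2 * ∑ j ∈ Finset.Icc 1 M, x t ⬝ᵥ (Υ 0 j).mulVec (fun i => g j i (x t i))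
        - 2 * ∑ s ∈ Finset.Icc 1 (M - 1), ∑ z ∈ Finset.Icc (s + 1) M,
            (fun i => g s i (x t i)) ⬝ᵥ (Υ s z).mulVec (fun i => g z i (x t i))
        + B.mulVec (u t) ⬝ᵥ Φ.mulVec (B.mulVec (u t))) t :=
  lyapunov_derivative_identity_general n m M Γ B g hcont P hPsymm Λ Ξ Υ hΛ Φ V hV Qb Q hQ hQb00
    hQb0j hQb0last hQbjj hQbsz hQbjlast hQblast hQbsym T u x hx ξ hξ
end

section
/- Let f_j : ℝⁿ → ℝⁿ, j ∈ {1,…,M}, be diagonal continuous nonlinearities satisfying the sector condition, and let φ ∈ {1,…,M} be such that for all s ∈ {1,…,φ} and all i ∈ {1,…,n}, lim_{ν→±∞} f_s^i(ν) = ±∞. Let Ξ^j (j ∈ {1,…,M}) and Υ_{s,z} (0 ≤ s < z ≤ M) be diagonal matrices with nonnegative entries, and suppose the diagonal matrix ∑_{k=1}^{φ} Ξ^k + 2 ∑_{s=0}^{φ} ∑_{z=s+1}^{φ} Υ_{s,z} is positive definite. Then the function W(x) = ∑_{j=1}^{M} f_j(x)^⊤ Ξ^j f_j(x) + 2 ∑_{j=1}^{M}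 x^⊤ Υ_{0,j} f_j(x) + 2 ∑_{s=1}^{M−1} ∑_{z=s+1}^{M} f_s(x)^⊤ Υ_{s,z} f_z(x) satisfies W(x) > 0 for all x ≠ 0 and W is radially unbounded: W(x) → +∞ as ‖x‖ → ∞. -/
/-!
Since the nonlinearities and the weight matrices are diagonal, `W` splits as `∑ᵢ Tᵢ(xᵢ)`, where
`Tᵢ` is a combination with nonnegative coefficients of products `h_s(ν) h_z(ν)`, with `h₀ = id` and
`h_j = f_jⁱ`. By the sector condition all these functions have the sign of `ν`, so every product
is nonnegative, and positive for `ν ≠ 0`. The `i`-th diagonal entry of the positive definite matrix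
is the sum of the coefficients of the products with indices `≤ φ`, so one of them is positive; as
`h_s` and `h_z` are then radially unbounded, that single term makes `Tᵢ` positive off `0` and
coercive. A sum of nonnegative coercive functions of the separate coordinates is coercive.
-/

open Filter Matrix Finset

def IsSector (f : ℝ → ℝ) : Prop := ∀ ν, ν ≠ 0 → 0 < ν * f ν

theorem isSector_id : IsSector id := fun _ hν => mul_self_pos.2 hν

namespace IsSector

variable {f k : ℝ → ℝ}

theorem apply_zero (hf : IsSector f) (hc : ContinuousAt f 0) : f 0 = 0 := by
  have hlim (s : Set ℝ) : Tendsto f (nhdsWithin 0 s) (nhds (f 0)) :=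
    hc.tendsto.mono_left nhdsWithin_le_nhds
  apply le_antisymm
  · refine le_of_tendsto (hlim (Set.Iio 0)) (eventually_nhdsWithin_of_forall fun ν hν => ?_)
    exact (neg_of_mul_pos_right (hf ν (ne_of_lt hν)) (le_of_lt hν)).le
  · refine ge_of_tendsto (hlim (Set.Ioi 0)) (eventually_nhdsWithin_of_forall fun ν hν => ?_)
    exact (pos_of_mul_pos_right (hf ν (ne_of_gt hν)) (le_of_lt hν)).le

theorem mul_pos (hf : IsSector f) (hk : IsSector k) {ν : ℝ} (hν : ν ≠ 0) : 0 < f ν * k ν :=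
  pos_of_mul_pos_right (a := ν * ν)
    (by convert _root_.mul_pos (hf ν hν) (hk ν hν) using 1; ring) (mul_self_nonneg ν)

theorem mul_nonneg (hf : IsSector f) (hk : IsSector k) (hf0 : f 0 = 0) (ν : ℝ) :
    0 ≤ f ν * k ν := by
  rcases eq_or_ne ν 0 with rfl | hν
  · simp [hf0]
  · exact (hf.mul_pos hk hν).le

end IsSector

theorem mul_nonneg_of_forall_isSector {N : ℕ} {h : ℕ → ℝ → ℝ}
    (hsec : ∀ s ≤ N, IsSector (h s)) (hzero : ∀ s ≤ N, h s 0 = 0) :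
    ∀ s ≤ N, ∀ z ≤ N, ∀ ν, 0 ≤ h s ν * h z ν :=
  fun s hs z hz => (hsec s hs).mul_nonneg (hsec z hz) (hzero s hs)

theorem tendsto_mul_cocompact_atTop {u v : ℝ → ℝ}
    (hu : Tendsto u atTop atTop ∧ Tendsto u atBot atBot)
    (hv : Tendsto v atTop atTop ∧ Tendsto v atBot atBot) :
    Tendsto (fun ν => u ν * v ν) (cocompact ℝ) atTop := by
  rw [cocompact_eq_atBot_atTop, tendsto_sup]
  exact ⟨hu.2.atBot_mul_atBot₀ hv.2, hu.1.atTop_mul_atTop₀ hv.1⟩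

section PairForm

variable (N : ℕ) (ξ : ℕ → ℝ) (υ : ℕ → ℕ → ℝ) (h : ℕ → ℝ → ℝ)

def pairForm (ν : ℝ) : ℝ :=
  ∑ j ∈ Icc 1 N, ξ j * (h j ν * h j ν) +
    2 * ∑ s ∈ range N, ∑ z ∈ Icc (s + 1) N, υ s z * (h s ν * h z ν)

variable {N ξ υ h}

theorem pairForm_diag_nonneg (hξ : ∀ j, 1 ≤ j → j ≤ N → 0 ≤ ξ j)
    (hh : ∀ s ≤ N, ∀ z ≤ N, ∀ ν, 0 ≤ h s ν * h z ν) (ν : ℝ) :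
    0 ≤ ∑ j ∈ Icc 1 N, ξ j * (h j ν * h j ν) :=
  sum_nonneg fun j hj => by
    rw [mem_Icc] at hj
    exact _root_.mul_nonneg (hξ j hj.1 hj.2) (hh j hj.2 j hj.2 ν)

theorem pairForm_offDiag_nonneg (hυ : ∀ s z, s < z → z ≤ N → 0 ≤ υ s z)
    (hh : ∀ s ≤ N, ∀ z ≤ N, ∀ ν, 0 ≤ h s ν * h z ν) (ν : ℝ) :
    0 ≤ ∑ s ∈ range N, ∑ z ∈ Icc (s + 1) N, υ s z * (h s ν * h z ν) :=
  sum_nonneg fun s hs => sum_nonneg fun z hz => by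
    simp only [mem_range, mem_Icc] at hs hz
    exact _root_.mul_nonneg (hυ s z (by omega) hz.2) (hh s (by omega) z hz.2 ν)

theorem pairForm_nonneg (hξ : ∀ j, 1 ≤ j → j ≤ N → 0 ≤ ξ j)
    (hυ : ∀ s z, s < z → z ≤ N → 0 ≤ υ s z) (hh : ∀ s ≤ N, ∀ z ≤ N, ∀ ν, 0 ≤ h s ν * h z ν)
    (ν : ℝ) : 0 ≤ pairForm N ξ υ h ν := by
  have := pairForm_diag_nonneg hξ hh ν
  have := pairForm_offDiag_nonneg hυ hh ν
  unfold pairForm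
  positivity

theorem diag_le_pairForm (hξ : ∀ j, 1 ≤ j → j ≤ N → 0 ≤ ξ j)
    (hυ : ∀ s z, s < z → z ≤ N → 0 ≤ υ s z) (hh : ∀ s ≤ N, ∀ z ≤ N, ∀ ν, 0 ≤ h s ν * h z ν)
    {j : ℕ} (hj1 : 1 ≤ j) (hjN : j ≤ N) (ν : ℝ) :
    ξ j * (h j ν * h j ν) ≤ pairForm N ξ υ h ν := by
  have hle : ξ j * (h j ν * h j ν) ≤ ∑ j ∈ Icc 1 N, ξ j * (h j ν * h j ν) :=
    single_le_sum (f := fun j => ξ j * (h j ν * h j ν)) (fun k hk => by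
      rw [mem_Icc] at hk
      exact _root_.mul_nonneg (hξ k hk.1 hk.2) (hh k hk.2 k hk.2 ν)) (mem_Icc.2 ⟨hj1, hjN⟩)
  have := pairForm_offDiag_nonneg hυ hh ν
  unfold pairForm
  linarith

theorem offDiag_le_pairForm (hξ : ∀ j, 1 ≤ j → j ≤ N → 0 ≤ ξ j)
    (hυ : ∀ s z, s < z → z ≤ N → 0 ≤ υ s z) (hh : ∀ s ≤ N, ∀ z ≤ N, ∀ ν, 0 ≤ h s ν * h z ν)
    {s z : ℕ} (hsz : s < z) (hzN : z ≤ N) (ν : ℝ) :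
    2 * υ s z * (h s ν * h z ν) ≤ pairForm N ξ υ h ν := by
  have hterm (s' z' : ℕ) (hs' : s' ∈ range N) (hz' : z' ∈ Icc (s' + 1) N) :
      0 ≤ υ s' z' * (h s' ν * h z' ν) := by
    simp only [mem_range, mem_Icc] at hs' hz'
    exact _root_.mul_nonneg (hυ s' z' (by omega) hz'.2) (hh s' (by omega) z' hz'.2 ν)
  have hle : υ s z * (h s ν * h z ν) ≤
      ∑ s ∈ range N, ∑ z ∈ Icc (s + 1) N, υ s z * (h s ν * h z ν) :=
    calc υ s z * (h s ν * h z ν) ≤ ∑ z ∈ Icc (s + 1) N, υ s z * (h s ν * h z ν) :=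
          single_le_sum (f := fun z => υ s z * (h s ν * h z ν))
            (hterm s · (mem_range.2 (by omega))) (mem_Icc.2 ⟨hsz, hzN⟩)
      _ ≤ _ := single_le_sum (f := fun s => ∑ z ∈ Icc (s + 1) N, υ s z * (h s ν * h z ν))
            (fun s' hs' => sum_nonneg (hterm s' · hs')) (mem_range.2 (by omega))
  have := pairForm_diag_nonneg hξ hh ν
  unfold pairForm
  linarith

theorem exists_pos_of_sum_diag_add_sum_offDiag_pos {K : ℕ}
    (hcoef : 0 < ∑ j ∈ Icc 1 K, ξ j + 2 * ∑ s ∈ range (K + 1), ∑ z ∈ Icc (s + 1) K, υ s z) :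
    (∃ j, 1 ≤ j ∧ j ≤ K ∧ 0 < ξ j) ∨ ∃ s z, s < z ∧ z ≤ K ∧ 0 < υ s z := by
  by_contra! hneg
  obtain ⟨hξ, hυ⟩ := hneg
  have hdiag : ∑ j ∈ Icc 1 K, ξ j ≤ 0 :=
    sum_nonpos fun j hj => hξ j (mem_Icc.1 hj).1 (mem_Icc.1 hj).2
  have hoff : ∑ s ∈ range (K + 1), ∑ z ∈ Icc (s + 1) K, υ s z ≤ 0 :=
    sum_nonpos fun s _ => sum_nonpos fun z hz => hυ s z (mem_Icc.1 hz).1 (mem_Icc.1 hz).2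
  linarith

theorem exists_pos_mul_le_pairForm (hξ : ∀ j, 1 ≤ j → j ≤ N → 0 ≤ ξ j)
    (hυ : ∀ s z, s < z → z ≤ N → 0 ≤ υ s z) (hh : ∀ s ≤ N, ∀ z ≤ N, ∀ ν, 0 ≤ h s ν * h z ν)
    {K : ℕ} (hKN : K ≤ N)
    (hcoef : 0 < ∑ j ∈ Icc 1 K, ξ j + 2 * ∑ s ∈ range (K + 1), ∑ z ∈ Icc (s + 1) K, υ s z) :
    ∃ a > 0, ∃ s ≤ K, ∃ z ≤ K, ∀ ν, a * (h s ν * h z ν) ≤ pairForm N ξ υ h ν := by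
  rcases exists_pos_of_sum_diag_add_sum_offDiag_pos hcoef with
    ⟨j, hj1, hjK, hξj⟩ | ⟨s, z, hsz, hzK, hυsz⟩
  · exact ⟨ξ j, hξj, j, hjK, j, hjK, diag_le_pairForm hξ hυ hh hj1 (hjK.trans hKN)⟩
  · exact ⟨2 * υ s z, by positivity, s, hsz.le.trans hzK, z, hzK,
      offDiag_le_pairForm hξ hυ hh hsz (hzK.trans hKN)⟩

theorem pairForm_pos (hξ : ∀ j, 1 ≤ j → j ≤ N → 0 ≤ ξ j)
    (hυ : ∀ s z, s < z → z ≤ N → 0 ≤ υ s z) (hsec : ∀ s ≤ N, IsSector (h s))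
    (hzero : ∀ s ≤ N, h s 0 = 0) {K : ℕ} (hKN : K ≤ N)
    (hcoef : 0 < ∑ j ∈ Icc 1 K, ξ j + 2 * ∑ s ∈ range (K + 1), ∑ z ∈ Icc (s + 1) K, υ s z)
    {ν : ℝ} (hν : ν ≠ 0) : 0 < pairForm N ξ υ h ν := by
  obtain ⟨a, ha, s, hs, z, hz, hle⟩ :=
    exists_pos_mul_le_pairForm hξ hυ (mul_nonneg_of_forall_isSector hsec hzero) hKN hcoef
  exact (_root_.mul_pos ha ((hsec s (hs.trans hKN)).mul_pos (hsec z (hz.trans hKN)) hν)).trans_le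
    (hle ν)

theorem tendsto_pairForm_cocompact_atTop (hξ : ∀ j, 1 ≤ j → j ≤ N → 0 ≤ ξ j)
    (hυ : ∀ s z, s < z → z ≤ N → 0 ≤ υ s z) (hsec : ∀ s ≤ N, IsSector (h s))
    (hzero : ∀ s ≤ N, h s 0 = 0) {K : ℕ} (hKN : K ≤ N)
    (hcoef : 0 < ∑ j ∈ Icc 1 K, ξ j + 2 * ∑ s ∈ range (K + 1), ∑ z ∈ Icc (s + 1) K, υ s z)
    (hrad : ∀ s ≤ K, Tendsto (h s) atTop atTop ∧ Tendsto (h s) atBot atBot) :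
    Tendsto (pairForm N ξ υ h) (cocompact ℝ) atTop := by
  obtain ⟨a, ha, s, hs, z, hz, hle⟩ :=
    exists_pos_mul_le_pairForm hξ hυ (mul_nonneg_of_forall_isSector hsec hzero) hKN hcoef
  exact tendsto_atTop_mono hle
    ((tendsto_mul_cocompact_atTop (hrad s hs) (hrad z hz)).const_mul_atTop ha)

end PairForm

theorem tendsto_sum_apply_cocompact_atTop {ι : Type*} [Fintype ι] {X : ι → Type*}
    [∀ i, TopologicalSpace (X i)] {T : ∀ i, X i → ℝ} (hT0 : ∀ i x, 0 ≤ T i x)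
    (hT : ∀ i, Tendsto (T i) (cocompact (X i)) atTop) :
    Tendsto (fun x : ∀ i, X i => ∑ i, T i (x i)) (cocompact (∀ i, X i)) atTop := by
  rw [← coprodᵢ_cocompact, tendsto_atTop]
  refine fun c => mem_coprodᵢ_iff.2 fun i => ⟨_, (hT i).eventually_ge_atTop c, fun x hx => ?_⟩
  exact hx.trans (single_le_sum (fun j _ => hT0 j (x j)) (mem_univ i))

theorem exists_pos_forall_le_of_tendsto_cocompact {E : Type*} [SeminormedAddCommGroup E]
    [ProperSpace E] {f : E → ℝ} (hf : Tendsto f (cocompact E) atTop) (c : ℝ) :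
    ∃ R, 0 < R ∧ ∀ x, R ≤ ‖x‖ → c ≤ f x := by
  rw [← Metric.cobounded_eq_cocompact] at hf
  obtain ⟨R, -, hR⟩ := hasBasis_cobounded_norm.eventually_iff.1 (hf.eventually_ge_atTop c)
  exact ⟨max R 1, by positivity, fun x hx => hR (le_of_max_le_left hx)⟩

namespace IsNonnegDiag

variable {n : ℕ} {A : Matrix (Fin n) (Fin n) ℝ}

theorem isDiag (hA : IsNonnegDiag A) : A.IsDiag := by
  obtain ⟨d, -, rfl⟩ := hA
  exact isDiag_diagonal d

theorem apply_self_nonneg (hA : IsNonnegDiag A) (i : Fin n) : 0 ≤ A i i := by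
  obtain ⟨d, hd, rfl⟩ := hA
  simpa using hd i

end IsNonnegDiag

theorem dotProduct_mulVec_of_isDiag {n : Type*} [Fintype n] [DecidableEq n]
    {A : Matrix n n ℝ} (hA : A.IsDiag) (v w : n → ℝ) :
    v ⬝ᵥ A *ᵥ w = ∑ i, A i i * (v i * w i) := by
  rw [← hA.diagonal_diag]
  simp only [dotProduct, mulVec_diagonal, diag_apply, diagonal_apply_eq]
  exact sum_congr rfl fun i _ => by ring

/-- Index `0` stands for the state itself, so that the terms `xᵀ Υ₀ⱼ f_j(x)` become pair terms. -/
def withIdAtZero (g : ℕ → ℝ → ℝ) (s : ℕ) : ℝ → ℝ := if s = 0 then id else g s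

theorem withIdAtZero_cases {g : ℕ → ℝ → ℝ} {N : ℕ} {P : (ℝ → ℝ) → Prop} (h0 : P id)
    (hg : ∀ j, 1 ≤ j → j ≤ N → P (g j)) {s : ℕ} (hs : s ≤ N) : P (withIdAtZero g s) := by
  unfold withIdAtZero
  split_ifs with hs0
  · exact h0
  · exact hg s (by omega) hs

theorem withIdAtZero_isSector {g : ℕ → ℝ → ℝ} {N : ℕ}
    (hg : ∀ j, 1 ≤ j → j ≤ N → IsSector (g j)) : ∀ s ≤ N, IsSector (withIdAtZero g s) :=
  fun _ => withIdAtZero_cases isSector_id hg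

theorem withIdAtZero_apply_zero {g : ℕ → ℝ → ℝ} {N : ℕ}
    (hg : ∀ j, 1 ≤ j → j ≤ N → IsSector (g j)) (hc : ∀ j, 1 ≤ j → j ≤ N → Continuous (g j)) :
    ∀ s ≤ N, withIdAtZero g s 0 = 0 :=
  fun _ => withIdAtZero_cases (P := fun f => f 0 = 0) rfl fun j h1 h2 =>
    (hg j h1 h2).apply_zero (hc j h1 h2).continuousAt

theorem tendsto_withIdAtZero {g : ℕ → ℝ → ℝ} {N : ℕ}
    (hg : ∀ j, 1 ≤ j → j ≤ N → Tendsto (g j) atTop atTop ∧ Tendsto (g j) atBot atBot) :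
    ∀ s ≤ N, Tendsto (withIdAtZero g s) atTop atTop ∧ Tendsto (withIdAtZero g s) atBot atBot :=
  fun _ => withIdAtZero_cases (P := fun f => Tendsto f atTop atTop ∧ Tendsto f atBot atBot)
    ⟨tendsto_id, tendsto_id⟩ hg

theorem range_eq_insert_zero_Icc {M : ℕ} (hM : 1 ≤ M) :
    range M = insert 0 (Icc 1 (M - 1)) := by
  ext s
  simp only [mem_range, mem_insert, mem_Icc]
  omega

theorem sum_dotProduct_eq_sum_pairForm {n M : ℕ} (hM : 1 ≤ M) (g : ℕ → Fin n → ℝ → ℝ)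
    {Ξ : ℕ → Matrix (Fin n) (Fin n) ℝ} {Υ : ℕ → ℕ → Matrix (Fin n) (Fin n) ℝ}
    (hΞ : ∀ j, 1 ≤ j → j ≤ M → (Ξ j).IsDiag) (hΥ : ∀ s z, s < z → z ≤ M → (Υ s z).IsDiag)
    (x : Fin n → ℝ) :
    ∑ j ∈ Icc 1 M, (fun i => g j i (x i)) ⬝ᵥ (Ξ j).mulVec (fun i => g j i (x i))
      + 2 * ∑ j ∈ Icc 1 M, x ⬝ᵥ (Υ 0 j).mulVec (fun i => g j i (x i))
      + 2 * ∑ s ∈ Icc 1 (M - 1), ∑ z ∈ Icc (s + 1) M,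
          (fun i => g s i (x i)) ⬝ᵥ (Υ s z).mulVec (fun i => g z i (x i)) =
    ∑ i, pairForm M (fun j => Ξ j i i) (fun s z => Υ s z i i)
      (withIdAtZero fun j => g j i) (x i) := by
  set h : Fin n → ℕ → ℝ → ℝ := fun i => withIdAtZero fun j => g j i
  have hg {j : ℕ} (hj : j ∈ Icc 1 M) (i : Fin n) : h i j = g j i := by
    simp only [h, withIdAtZero, if_neg (show j ≠ 0 by rw [mem_Icc] at hj; omega)]
  have hdiag : ∑ j ∈ Icc 1 M, (fun i => g j i (x i)) ⬝ᵥ (Ξ j).mulVec (fun i => g j i (x i)) =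
      ∑ i, ∑ j ∈ Icc 1 M, Ξ j i i * (h i j (x i) * h i j (x i)) := by
    rw [sum_comm]
    refine sum_congr rfl fun j hj => ?_
    rw [dotProduct_mulVec_of_isDiag (hΞ j (mem_Icc.1 hj).1 (mem_Icc.1 hj).2)]
    simp only [hg hj]
  have hstate : ∑ j ∈ Icc 1 M, x ⬝ᵥ (Υ 0 j).mulVec (fun i => g j i (x i)) =
      ∑ i, ∑ z ∈ Icc 1 M, Υ 0 z i i * (h i 0 (x i) * h i z (x i)) := by
    rw [sum_comm]
    refine sum_congr rfl fun j hj => ?_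
    rw [dotProduct_mulVec_of_isDiag (hΥ 0 j (mem_Icc.1 hj).1 (mem_Icc.1 hj).2)]
    simp only [hg hj, h, withIdAtZero, if_pos, id]
  have hoff : ∑ s ∈ Icc 1 (M - 1), ∑ z ∈ Icc (s + 1) M,
      (fun i => g s i (x i)) ⬝ᵥ (Υ s z).mulVec (fun i => g z i (x i)) =
      ∑ i, ∑ s ∈ Icc 1 (M - 1), ∑ z ∈ Icc (s + 1) M,
        Υ s z i i * (h i s (x i) * h i z (x i)) := by
    rw [sum_comm]
    refine sum_congr rfl fun s hs => ?_
    rw [sum_comm]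
    refine sum_congr rfl fun z hz => ?_
    simp only [mem_Icc] at hs hz
    rw [dotProduct_mulVec_of_isDiag (hΥ s z (by omega) hz.2)]
    simp only [hg (mem_Icc.2 ⟨hs.1, by omega⟩), hg (mem_Icc.2 ⟨by omega, hz.2⟩)]
  rw [hdiag, hstate, hoff]
  simp only [pairForm, range_eq_insert_zero_Icc hM, sum_insert (by simp : 0 ∉ Icc 1 (M - 1)),
    zero_add, mul_add, mul_sum, sum_add_distrib]
  exact add_assoc _ _ _

theorem dissipation_posdef_radially_unbounded_general
    (n M : ℕ) (hM : 1 ≤ M)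
    (g : ℕ → Fin n → ℝ → ℝ)
    (hcont : ∀ j, 1 ≤ j → j ≤ M → ∀ i, Continuous (g j i))
    (hsector : ∀ j, 1 ≤ j → j ≤ M → ∀ i, ∀ ν : ℝ, ν ≠ 0 → 0 < ν * g j i ν)
    (φ : ℕ) (hφM : φ ≤ M)
    (hradial : ∀ s, 1 ≤ s → s ≤ φ → ∀ i,
      Tendsto (g s i) atTop atTop ∧ Tendsto (g s i) atBot atBot)
    (Ξ : ℕ → Matrix (Fin n) (Fin n) ℝ) (Υ : ℕ → ℕ → Matrix (Fin n) (Fin n) ℝ)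
    (hΞ : ∀ j, 1 ≤ j → j ≤ M → IsNonnegDiag (Ξ j))
    (hΥ : ∀ s z, s < z → z ≤ M → IsNonnegDiag (Υ s z))
    (hpd : (∑ k ∈ Finset.Icc 1 φ, Ξ k +
      (2 : ℝ) • ∑ s ∈ Finset.range (φ + 1), ∑ z ∈ Finset.Icc (s + 1) φ, Υ s z).PosDef)
    (W : EuclideanSpace ℝ (Fin n) → ℝ)
    (hW : ∀ x : EuclideanSpace ℝ (Fin n),
      W x = ∑ j ∈ Finset.Icc 1 M,
              (fun i => g j i (x i)) ⬝ᵥ (Ξ j).mulVec (fun i => g j i (x i))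
          + 2 * ∑ j ∈ Finset.Icc 1 M, (x : Fin n → ℝ) ⬝ᵥ (Υ 0 j).mulVec (fun i => g j i (x i))
          + 2 * ∑ s ∈ Finset.Icc 1 (M - 1), ∑ z ∈ Finset.Icc (s + 1) M,
              (fun i => g s i (x i)) ⬝ᵥ (Υ s z).mulVec (fun i => g z i (x i))) :
    (∀ x : EuclideanSpace ℝ (Fin n), x ≠ 0 → 0 < W x) ∧
      (∀ c : ℝ, 0 < c → ∃ R : ℝ, 0 < R ∧
        ∀ x : EuclideanSpace ℝ (Fin n), R ≤ ‖x‖ → c ≤ W x) := by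
  set h : Fin n → ℕ → ℝ → ℝ := fun i => withIdAtZero fun j => g j i
  set T : Fin n → ℝ → ℝ := fun i => pairForm M (fun j => Ξ j i i) (fun s z => Υ s z i i) (h i)
  have hWT (x : EuclideanSpace ℝ (Fin n)) : W x = ∑ i, T i (x i) :=
    (hW x).trans (sum_dotProduct_eq_sum_pairForm hM g (fun j h1 h2 => (hΞ j h1 h2).isDiag)
      (fun s z h1 h2 => (hΥ s z h1 h2).isDiag) x)
  have hξ (i : Fin n) : ∀ j, 1 ≤ j → j ≤ M → 0 ≤ Ξ j i i := fun j h1 h2 =>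
    (hΞ j h1 h2).apply_self_nonneg i
  have hυ (i : Fin n) : ∀ s z, s < z → z ≤ M → 0 ≤ Υ s z i i := fun s z h1 h2 =>
    (hΥ s z h1 h2).apply_self_nonneg i
  have hsec (i : Fin n) := withIdAtZero_isSector fun j h1 h2 => hsector j h1 h2 i
  have hzero (i : Fin n) :=
    withIdAtZero_apply_zero (fun j h1 h2 => hsector j h1 h2 i) fun j h1 h2 => hcont j h1 h2 i
  have hrad (i : Fin n) := tendsto_withIdAtZero fun s h1 h2 => hradial s h1 h2 i
  have hcoef (i : Fin n) :
      0 < ∑ k ∈ Icc 1 φ, Ξ k i i + 2 * ∑ s ∈ range (φ + 1), ∑ z ∈ Icc (s + 1) φ, Υ s z i i := by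
    simpa [Matrix.sum_apply] using hpd.diag_pos (i := i)
  have hT0 (i : Fin n) : ∀ ν, 0 ≤ T i ν :=
    pairForm_nonneg (hξ i) (hυ i) (mul_nonneg_of_forall_isSector (hsec i) (hzero i))
  refine ⟨fun x hx => ?_, fun c _ => exists_pos_forall_le_of_tendsto_cocompact ?_ c⟩
  · obtain ⟨i, hi⟩ : ∃ i, x i ≠ 0 := by
      by_contra! hx0
      exact hx (by ext i; exact hx0 i)
    rw [hWT]
    exact sum_pos' (fun j _ => hT0 j (x j))
      ⟨i, mem_univ i, pairForm_pos (hξ i) (hυ i) (hsec i) (hzero i) hφM (hcoef i) hi⟩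
  · rw [show W = (fun y => ∑ i, T i (y i)) ∘ PiLp.homeomorph 2 (fun _ : Fin n => ℝ) from
      funext hWT]
    exact (tendsto_sum_apply_cocompact_atTop hT0 fun i => tendsto_pairForm_cocompact_atTop (hξ i)
      (hυ i) (hsec i) (hzero i) hφM (hcoef i) (hrad i)).comp (PiLp.homeomorph 2 _).map_cocompact.le

/-- **Positivity and radial unboundedness of the dissipation function**
`W(x) = ∑_j f_jᵀ Ξʲ f_j + 2 ∑_j xᵀ Υ₀ⱼ f_j + 2 ∑_{s<z} f_sᵀ Υ_{s,z} f_z` where the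
diagonal continuous nonlinearities `f_jⁱ = g j i` satisfy the sector condition and those
with index `≤ φ` are radially unbounded, under the positive definiteness of
`∑_{k=1}^{φ} Ξᵏ + 2 ∑_{s=0}^{φ} ∑_{z=s+1}^{φ} Υ_{s,z}`. -/
theorem dissipation_posdef_radially_unbounded
    (n M : ℕ) (hM : 1 ≤ M)
    (g : ℕ → Fin n → ℝ → ℝ)
    (hcont : ∀ j, 1 ≤ j → j ≤ M → ∀ i, Continuous (g j i))
    (hsector : ∀ j, 1 ≤ j → j ≤ M → ∀ i, ∀ ν : ℝ, ν ≠ 0 → 0 < ν * g j i ν)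
    (φ : ℕ) (hφ1 : 1 ≤ φ) (hφM : φ ≤ M)
    (hradial : ∀ s, 1 ≤ s → s ≤ φ → ∀ i,
      Tendsto (g s i) atTop atTop ∧ Tendsto (g s i) atBot atBot)
    (Ξ : ℕ → Matrix (Fin n) (Fin n) ℝ) (Υ : ℕ → ℕ → Matrix (Fin n) (Fin n) ℝ)
    (hΞ : ∀ j, 1 ≤ j → j ≤ M → IsNonnegDiag (Ξ j))
    (hΥ : ∀ s z, s < z → z ≤ M → IsNonnegDiag (Υ s z))
    (hpd : (∑ k ∈ Finset.Icc 1 φ, Ξ k +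
      (2 : ℝ) • ∑ s ∈ Finset.range (φ + 1), ∑ z ∈ Finset.Icc (s + 1) φ, Υ s z).PosDef)
    (W : EuclideanSpace ℝ (Fin n) → ℝ)
    (hW : ∀ x : EuclideanSpace ℝ (Fin n),
      W x = ∑ j ∈ Finset.Icc 1 M,
              (fun i => g j i (x i)) ⬝ᵥ (Ξ j).mulVec (fun i => g j i (x i))
          + 2 * ∑ j ∈ Finset.Icc 1 M, (x : Fin n → ℝ) ⬝ᵥ (Υ 0 j).mulVec (fun i => g j i (x i))
          + 2 * ∑ s ∈ Finset.Icc 1 (M - 1), ∑ z ∈ Finset.Icc (s + 1) M,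
              (fun i => g s i (x i)) ⬝ᵥ (Υ s z).mulVec (fun i => g z i (x i))) :
    (∀ x : EuclideanSpace ℝ (Fin n), x ≠ 0 → 0 < W x) ∧
      (∀ c : ℝ, 0 < c → ∃ R : ℝ, 0 < R ∧
        ∀ x : EuclideanSpace ℝ (Fin n), R ≤ ‖x‖ → c ≤ W x) :=
  dissipation_posdef_radially_unbounded_general n M hM g hcont hsector φ hφM hradial Ξ Υ hΞ hΥ hpd W
    hW
end
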